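/- arXiv:2510.07820 — 4 statements merged into one kernel-verified Lean document; each statement's English description precedes it below -/
import Mathlib

section
/- For any unit vectors ψ_1, …, ψ_T in ℂ^d, the complex number ∑_{π ∈ S_T} ∏_{t=1}^T ⟨ψ_t, ψ_{π(t)}⟩ is real, and its value is at least 1. -/
open scoped ComplexOrder

section SumPermAuxSection
open Finset

namespace SumPermAux

variable {d : ℕ}

/-- Coefficient at multi-index `f` of the symmetrized tensor `∑_π v_{π 1} ⊗ ⋯ ⊗ v_{π k}`. -/
noncomputable def phi (d : ℕ) (v : ℕ → Fin d → ℂ) (k : ℕ) (f : Fin k → Fin d) : ℂ :=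
  ∑ π : Equiv.Perm (Fin k), ∏ t : Fin k, v t (f (π t))

/-- Squared norm of the symmetrized tensor, as a complex number. -/
noncomputable def nsq (d : ℕ) (v : ℕ → Fin d → ℂ) (k : ℕ) : ℂ :=
  ∑ f : Fin k → Fin d, star (phi d v k f) * phi d v k f

lemma phi_comp_perm (v : ℕ → Fin d → ℂ) (k : ℕ) (f : Fin k → Fin d)
    (τ : Equiv.Perm (Fin k)) : phi d v k (f ∘ τ) = phi d v k f := by
  unfold phi
  exact Fintype.sum_equiv (Equiv.mulLeft τ) _ _ (fun π => rfl)

lemma exists_comp_perm {α β : Type*} (p q : α → β) (hp : Function.Injective p)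
    (hq : Function.Injective q) (h : Set.range p = Set.range q) :
    ∃ τ : Equiv.Perm α, p = q ∘ τ := by
  refine ⟨(Equiv.ofInjective p hp).trans ((Equiv.setCongr h).trans
    (Equiv.ofInjective q hq).symm), ?_⟩
  funext x
  simp only [Function.comp_apply, Equiv.trans_apply, Equiv.setCongr_apply]
  rw [Equiv.apply_ofInjective_symm hq]
  simp

lemma phi_comp_inj (v : ℕ → Fin d → ℂ) {k m : ℕ} (f : Fin m → Fin d)
    (p q : Fin k → Fin m) (hp : Function.Injective p) (hq : Function.Injective q)
    (h : Set.range p = Set.range q) :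
    phi d v k (f ∘ p) = phi d v k (f ∘ q) := by
  obtain ⟨τ, rfl⟩ := exists_comp_perm p q hp hq h
  rw [show f ∘ (q ∘ ⇑τ) = (f ∘ q) ∘ ⇑τ from rfl, phi_comp_perm]

lemma phi_succ (v : ℕ → Fin d → ℂ) (k : ℕ) (f : Fin (k + 1) → Fin d) :
    phi d v (k + 1) f =
      ∑ j : Fin (k + 1), v 0 (f j) * phi d (fun t => v (t + 1)) k (f ∘ j.succAbove) := by
  unfold phi
  rw [← Equiv.sum_comp Equiv.Perm.decomposeFin.symm, Fintype.sum_prod_type]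
  refine Finset.sum_congr rfl fun j _ => ?_
  have key : ∀ σ : Equiv.Perm (Fin k),
      (∏ t : Fin (k+1), v t (f (Equiv.Perm.decomposeFin.symm (j, σ) t)))
      = v 0 (f j) * ∏ i : Fin k, (fun t => v (t+1)) (i : ℕ)
          ((f ∘ fun i : Fin k => Equiv.swap 0 j i.succ) (σ i)) := by
    intro σ
    rw [Fin.prod_univ_succ]
    simp [Fin.val_succ]
  rw [Finset.sum_congr rfl (fun σ _ => key σ), ← Finset.mul_sum]
  congr 1
  have hp : Function.Injective (fun i : Fin k => Equiv.swap 0 j i.succ) :=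
    (Equiv.injective _).comp (Fin.succ_injective k)
  have hq : Function.Injective (Fin.succAbove j) := Fin.succAbove_right_injective
  have hr : Set.range (fun i : Fin k => Equiv.swap 0 j i.succ)
      = Set.range (Fin.succAbove j) := by
    rw [Fin.range_succAbove]
    have : (fun i : Fin k => Equiv.swap 0 j i.succ) = ⇑(Equiv.swap 0 j) ∘ Fin.succ := rfl
    rw [this, Set.range_comp, Fin.range_succ,
      Set.image_compl_eq (Equiv.bijective _), Set.image_singleton, Equiv.swap_apply_left]
  have h2 := phi_comp_inj (fun t => v (t + 1)) f _ _ hp hq hr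
  unfold phi at h2
  exact h2

lemma sum_pair (k : ℕ) (j : Fin (k + 1)) (F : Fin d → ℂ) (G : (Fin k → Fin d) → ℂ) :
    ∑ f : Fin (k + 1) → Fin d, F (f j) * G (f ∘ j.succAbove)
      = (∑ a, F a) * (∑ g : Fin k → Fin d, G g) := by
  rw [← Equiv.sum_comp (Fin.insertNthEquiv (fun _ => Fin d) j)
    (fun f => F (f j) * G (f ∘ j.succAbove)), Fintype.sum_prod_type, Finset.sum_mul_sum]
  refine Finset.sum_congr rfl fun a _ => Finset.sum_congr rfl fun g _ => ?_
  simp only [Fin.insertNthEquiv_apply]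
  congr 1
  · rw [Fin.insertNth_apply_same]
  · congr 1
    funext i
    simp

lemma sum_fun_split {m : ℕ} (M : (Fin (m + 1) → Fin d) → ℂ) :
    ∑ h : Fin (m + 1) → Fin d, M h = ∑ a, ∑ g : Fin m → Fin d, M (Fin.cons a g) := by
  rw [← Equiv.sum_comp (Fin.consEquiv (fun _ : Fin (m + 1) => Fin d)) M,
    Fintype.sum_prod_type]
  rfl

lemma sum_triple {n : ℕ} (j j' : Fin (n + 2)) (u : Fin n → Fin (n + 2))
    (hc : Function.Bijective (Fin.cons j (Fin.cons j' u) : Fin (n + 2) → Fin (n + 2)))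
    (H : Fin d → Fin d → (Fin n → Fin d) → ℂ) :
    ∑ f : Fin (n + 2) → Fin d, H (f j) (f j') (f ∘ u)
      = ∑ a, ∑ b, ∑ g : Fin n → Fin d, H a b g := by
  set c : Fin (n + 2) → Fin (n + 2) := Fin.cons j (Fin.cons j' u) with hcdef
  set e := Equiv.ofBijective c hc with hedef
  have hsj : e.symm j = 0 := by
    rw [Equiv.symm_apply_eq]; show c 0 = j; simp [hcdef]
  have hsj' : e.symm j' = 1 := by
    rw [Equiv.symm_apply_eq]; show c 1 = j'
    rw [show (1 : Fin (n+2)) = Fin.succ 0 from rfl]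
    simp [hcdef]
  have hsu : ∀ i, e.symm (u i) = i.succ.succ := by
    intro i
    rw [Equiv.symm_apply_eq]; show c i.succ.succ = u i
    simp [hcdef]
  rw [← Equiv.sum_comp (Equiv.arrowCongr e (Equiv.refl (Fin d)))
    (fun f => H (f j) (f j') (f ∘ u))]
  have step1 : ∀ h : Fin (n + 2) → Fin d,
      H ((Equiv.arrowCongr e (Equiv.refl (Fin d)) h) j)
        ((Equiv.arrowCongr e (Equiv.refl (Fin d)) h) j')
        ((Equiv.arrowCongr e (Equiv.refl (Fin d)) h) ∘ u)
      = H (h 0) (h 1) (fun i => h i.succ.succ) := by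
    intro h
    have hx : ∀ x, (Equiv.arrowCongr e (Equiv.refl (Fin d)) h) x = h (e.symm x) :=
      fun x => rfl
    rw [hx, hx, hsj, hsj']
    congr 1
    funext i
    rw [show ((Equiv.arrowCongr e (Equiv.refl (Fin d)) h) ∘ u) i
      = h (e.symm (u i)) from rfl, hsu]
  rw [Finset.sum_congr rfl fun h _ => step1 h]
  refine (sum_fun_split _).trans (Finset.sum_congr rfl fun a _ => ?_)
  refine (sum_fun_split _).trans
    (Finset.sum_congr rfl fun b _ => Finset.sum_congr rfl fun g _ => ?_)
  rw [show (1 : Fin (n + 2)) = Fin.succ 0 from rfl]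
  simp

lemma cross_nonneg (v : ℕ → Fin d → ℂ) (k : ℕ) (j j' : Fin (k + 1)) (hjj : j ≠ j') :
    0 ≤ ∑ f : Fin (k + 1) → Fin d,
      (star (v 0 (f j)) * star (phi d (fun t => v (t + 1)) k (f ∘ j.succAbove)))
        * (v 0 (f j') * phi d (fun t => v (t + 1)) k (f ∘ j'.succAbove)) := by
  match k, j, j', hjj with
  | 0, j, j', hjj => exact absurd (Fin.ext (by omega)) hjj
  | n + 1, j, j', hjj =>
    set w : ℕ → Fin d → ℂ := fun t => v (t + 1) with hw
    obtain ⟨j'', hj''⟩ := Fin.exists_succAbove_eq hjj.symm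
    set u : Fin n → Fin (n + 2) := j.succAbove ∘ j''.succAbove with hu
    have hu_inj : Function.Injective u :=
      Fin.succAbove_right_injective.comp Fin.succAbove_right_injective
    have hj'u : j' ∉ Set.range u := by
      rintro ⟨i, hi⟩
      exact Fin.succAbove_ne j'' i (Fin.succAbove_right_injective (hi.trans hj''.symm))
    have hju : j ∉ Set.range u := by
      rintro ⟨i, hi⟩
      exact Fin.succAbove_ne j _ hi
    have r1 : Set.range (Fin.cons j' u : Fin (n + 1) → Fin (n + 2))
        = Set.range j.succAbove := by
      rw [Fin.range_cons, Fin.range_succAbove]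
      ext x
      simp only [Set.mem_insert_iff, Set.mem_compl_iff, Set.mem_singleton_iff,
        Set.mem_range]
      constructor
      · rintro (rfl | ⟨i, rfl⟩)
        · exact hjj.symm
        · exact Fin.succAbove_ne j _
      · intro hx
        obtain ⟨y, rfl⟩ := Fin.exists_succAbove_eq hx
        rcases eq_or_ne y j'' with rfl | hy
        · exact Or.inl hj''
        · obtain ⟨z, rfl⟩ := Fin.exists_succAbove_eq hy
          exact Or.inr ⟨z, rfl⟩
    have r2 : Set.range (Fin.cons j u : Fin (n + 1) → Fin (n + 2))
        = Set.range j'.succAbove := by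
      rw [Fin.range_cons, Fin.range_succAbove]
      ext x
      simp only [Set.mem_insert_iff, Set.mem_compl_iff, Set.mem_singleton_iff,
        Set.mem_range]
      constructor
      · rintro (rfl | ⟨i, rfl⟩)
        · exact hjj
        · intro hxe
          exact hj'u ⟨i, hxe⟩
      · intro hx
        rcases eq_or_ne x j with rfl | hxj
        · exact Or.inl rfl
        · obtain ⟨y, rfl⟩ := Fin.exists_succAbove_eq hxj
          have hy : y ≠ j'' := by
            rintro rfl; exact hx hj''
          obtain ⟨z, rfl⟩ := Fin.exists_succAbove_eq hy
          exact Or.inr ⟨z, rfl⟩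
    have hcons1_inj : Function.Injective (Fin.cons j' u : Fin (n + 1) → Fin (n + 2)) :=
      Fin.cons_injective_of_injective hj'u hu_inj
    have hcons2_inj : Function.Injective (Fin.cons j u : Fin (n + 1) → Fin (n + 2)) :=
      Fin.cons_injective_of_injective hju hu_inj
    have hjc : j ∉ Set.range (Fin.cons j' u : Fin (n + 1) → Fin (n + 2)) := by
      rw [r1, Fin.range_succAbove]; simp
    have hc : Function.Bijective
        (Fin.cons j (Fin.cons j' u) : Fin (n + 2) → Fin (n + 2)) :=
      (Finite.injective_iff_bijective).mp
        (Fin.cons_injective_of_injective hjc hcons1_inj)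
    have hphi1 : ∀ f : Fin (n + 2) → Fin d,
        phi d w (n + 1) (f ∘ j.succAbove) = phi d w (n + 1) (Fin.cons (f j') (f ∘ u)) := by
      intro f
      rw [← Fin.comp_cons]
      exact phi_comp_inj w f _ _ Fin.succAbove_right_injective hcons1_inj r1.symm
    have hphi2 : ∀ f : Fin (n + 2) → Fin d,
        phi d w (n + 1) (f ∘ j'.succAbove) = phi d w (n + 1) (Fin.cons (f j) (f ∘ u)) := by
      intro f
      rw [← Fin.comp_cons]
      exact phi_comp_inj w f _ _ Fin.succAbove_right_injective hcons2_inj r2.symm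
    have hsum : ∑ f : Fin (n + 2) → Fin d,
        (star (v 0 (f j)) * star (phi d w (n + 1) (f ∘ j.succAbove)))
          * (v 0 (f j') * phi d w (n + 1) (f ∘ j'.succAbove))
        = ∑ g : Fin n → Fin d,
            (∑ a, star (v 0 a) * phi d w (n + 1) (Fin.cons a g))
              * star (∑ b, star (v 0 b) * phi d w (n + 1) (Fin.cons b g)) := by
      have e1 : ∑ f : Fin (n + 2) → Fin d,
          (star (v 0 (f j)) * star (phi d w (n + 1) (f ∘ j.succAbove)))
            * (v 0 (f j') * phi d w (n + 1) (f ∘ j'.succAbove))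
          = ∑ f : Fin (n + 2) → Fin d,
            (star (v 0 (f j)) * phi d w (n + 1) (Fin.cons (f j) (f ∘ u)))
              * (v 0 (f j') * star (phi d w (n + 1) (Fin.cons (f j') (f ∘ u)))) := by
        refine Finset.sum_congr rfl fun f _ => ?_
        rw [hphi1 f, hphi2 f]; ring
      rw [e1, sum_triple j j' u hc (fun a b g =>
        (star (v 0 a) * phi d w (n + 1) (Fin.cons a g))
          * (v 0 b * star (phi d w (n + 1) (Fin.cons b g))))]
      rw [Finset.sum_comm]
      rw [Finset.sum_congr rfl fun b _ => Finset.sum_comm]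
      rw [Finset.sum_comm]
      refine Finset.sum_congr rfl fun g _ => ?_
      have hcomm : ∀ b a : Fin d,
          star (v 0 a) * phi d w (n + 1) (Fin.cons a g)
            * (v 0 b * star (phi d w (n + 1) (Fin.cons b g)))
          = (v 0 b * star (phi d w (n + 1) (Fin.cons b g)))
            * (star (v 0 a) * phi d w (n + 1) (Fin.cons a g)) := fun _ _ => mul_comm _ _
      rw [Finset.sum_congr rfl fun b _ => Finset.sum_congr rfl fun a _ => hcomm b a,
        ← Finset.sum_mul_sum, mul_comm]
      congr 1
      rw [star_sum]
      refine Finset.sum_congr rfl fun b _ => ?_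
      rw [star_mul', star_star]
    rw [hsum]
    refine Finset.sum_nonneg fun g _ => ?_
    exact mul_star_self_nonneg _

lemma nsq_succ_ge (v : ℕ → Fin d → ℂ) (k : ℕ)
    (hv0 : ∑ a, star (v 0 a) * v 0 a = 1) :
    ((k + 1 : ℕ) : ℂ) * nsq d (fun t => v (t + 1)) k ≤ nsq d v (k + 1) := by
  set w : ℕ → Fin d → ℂ := fun t => v (t + 1) with hw
  set S : Fin (k + 1) → Fin (k + 1) → ℂ := fun j j' =>
    ∑ f : Fin (k + 1) → Fin d,
      (star (v 0 (f j)) * star (phi d w k (f ∘ j.succAbove)))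
        * (v 0 (f j') * phi d w k (f ∘ j'.succAbove)) with hS
  have expand : nsq d v (k + 1) = ∑ j : Fin (k + 1), ∑ j' : Fin (k + 1), S j j' := by
    unfold nsq
    have h1 : ∀ f : Fin (k + 1) → Fin d,
        star (phi d v (k + 1) f) * phi d v (k + 1) f
        = ∑ j : Fin (k + 1), ∑ j' : Fin (k + 1),
            (star (v 0 (f j)) * star (phi d w k (f ∘ j.succAbove)))
              * (v 0 (f j') * phi d w k (f ∘ j'.succAbove)) := by
      intro f
      rw [phi_succ, star_sum, Finset.sum_mul_sum]
      exact Finset.sum_congr rfl fun j _ => Finset.sum_congr rfl fun j' _ => by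
        rw [star_mul']
    rw [Finset.sum_congr rfl fun f _ => h1 f, Finset.sum_comm]
    exact Finset.sum_congr rfl fun j _ => Finset.sum_comm
  have diag : ∀ j : Fin (k + 1), S j j = nsq d w k := by
    intro j
    simp only [hS]
    have : ∀ f : Fin (k + 1) → Fin d,
        (star (v 0 (f j)) * star (phi d w k (f ∘ j.succAbove)))
          * (v 0 (f j) * phi d w k (f ∘ j.succAbove))
        = (fun a => star (v 0 a) * v 0 a) (f j)
            * (fun g => star (phi d w k g) * phi d w k g) (f ∘ j.succAbove) := by
      intro f; simp only; ring
    rw [Finset.sum_congr rfl fun f _ => this f]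
    refine (sum_pair k j (fun a => star (v 0 a) * v 0 a)
      (fun g => star (phi d w k g) * phi d w k g)).trans ?_
    rw [hv0, one_mul]
    rfl
  have hsplit : ∀ j : Fin (k + 1),
      (∑ j' : Fin (k + 1), S j j') = nsq d w k + ∑ j' ∈ univ.erase j, S j j' := by
    intro j
    rw [← Finset.add_sum_erase _ _ (mem_univ j), diag j]
  rw [expand, Finset.sum_congr rfl fun j _ => hsplit j, Finset.sum_add_distrib,
    Finset.sum_const, card_univ, Fintype.card_fin, nsmul_eq_mul]
  refine le_add_of_nonneg_right ?_
  refine Finset.sum_nonneg fun j _ => Finset.sum_nonneg fun j' hj' => ?_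
  exact cross_nonneg v k j j' (Finset.ne_of_mem_erase hj').symm

lemma nsq_ge (d : ℕ) : ∀ (k : ℕ) (v : ℕ → Fin d → ℂ),
    (∀ t < k, ∑ a, star (v t a) * v t a = 1) → ((k.factorial : ℂ) ≤ nsq d v k)
  | 0, v, _ => by
    have h1 : nsq d v 0 = 1 := by
      unfold nsq phi
      simp [Finset.univ_unique]
    rw [h1]
    simp
  | (k + 1), v, hv => by
    have ih := nsq_ge d k (fun t => v (t + 1)) (fun t ht => hv (t + 1) (by omega))
    have step := nsq_succ_ge v k (hv 0 (Nat.succ_pos k))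
    have hcast : (0 : ℂ) ≤ ((k + 1 : ℕ) : ℂ) := by
      have h' : ((k + 1 : ℕ) : ℂ) = (((k + 1 : ℕ) : ℝ) : ℂ) := by push_cast; ring
      rw [h', Complex.zero_le_real]
      positivity
    calc ((k + 1).factorial : ℂ) = ((k + 1 : ℕ) : ℂ) * (k.factorial : ℂ) := by
          rw [Nat.factorial_succ]; push_cast; ring
      _ ≤ ((k + 1 : ℕ) : ℂ) * nsq d (fun t => v (t + 1)) k :=
          mul_le_mul_of_nonneg_left ih hcast
      _ ≤ nsq d v (k + 1) := step

lemma nsq_eq (v : ℕ → Fin d → ℂ) (k : ℕ) :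
    nsq d v k = (k.factorial : ℂ) *
      ∑ π : Equiv.Perm (Fin k), ∏ t : Fin k, ∑ a, star (v t a) * v (π t) a := by
  unfold nsq phi
  have h1 : ∀ f : Fin k → Fin d,
      star (∑ π : Equiv.Perm (Fin k), ∏ t : Fin k, v t (f (π t)))
        * (∑ π : Equiv.Perm (Fin k), ∏ t : Fin k, v t (f (π t)))
      = ∑ π : Equiv.Perm (Fin k), ∑ σ : Equiv.Perm (Fin k),
          ∏ s : Fin k, (star (v (π⁻¹ s) (f s)) * v (σ⁻¹ s) (f s)) := by
    intro f
    rw [star_sum, Finset.sum_mul_sum]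
    refine Finset.sum_congr rfl fun π _ => Finset.sum_congr rfl fun σ _ => ?_
    rw [star_prod]
    have e1 : ∀ ρ : Equiv.Perm (Fin k), ∀ g : Fin k → ℂ,
        (∏ t : Fin k, g (ρ t)) = ∏ s : Fin k, g s := fun ρ g => Equiv.prod_comp ρ g
    calc (∏ t : Fin k, star (v t (f (π t)))) * ∏ t : Fin k, v t (f (σ t))
        = (∏ t : Fin k, star (v (π⁻¹ (π t)) (f (π t))))
            * ∏ t : Fin k, v (σ⁻¹ (σ t)) (f (σ t)) := by
          simp only [Equiv.Perm.inv_def, Equiv.symm_apply_apply]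
      _ = (∏ s : Fin k, star (v (π⁻¹ s) (f s))) * ∏ s : Fin k, v (σ⁻¹ s) (f s) := by
          rw [e1 π (fun s => star (v (π⁻¹ s) (f s))), e1 σ (fun s => v (σ⁻¹ s) (f s))]
      _ = ∏ s : Fin k, star (v (π⁻¹ s) (f s)) * v (σ⁻¹ s) (f s) := by
          rw [Finset.prod_mul_distrib]
  rw [Finset.sum_congr rfl fun f _ => h1 f, Finset.sum_comm]
  rw [Finset.sum_congr rfl fun π _ => Finset.sum_comm]
  have h2 : ∀ π σ : Equiv.Perm (Fin k),
      (∑ f : Fin k → Fin d, ∏ s : Fin k, star (v (π⁻¹ s) (f s)) * v (σ⁻¹ s) (f s))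
      = ∏ s : Fin k, ∑ a, star (v (π⁻¹ s) a) * v (σ⁻¹ s) a := by
    intro π σ
    rw [Finset.prod_univ_sum]
    rw [Fintype.piFinset_univ]
  rw [Finset.sum_congr rfl fun π _ => Finset.sum_congr rfl fun σ _ => h2 π σ]
  have h3 : ∀ π σ : Equiv.Perm (Fin k),
      (∏ s : Fin k, ∑ a, star (v (π⁻¹ s) a) * v (σ⁻¹ s) a)
      = ∏ t : Fin k, ∑ a, star (v t a) * v ((σ⁻¹ * π) t) a := by
    intro π σ
    rw [← Equiv.prod_comp π (fun s => ∑ a, star (v (π⁻¹ s) a) * v (σ⁻¹ s) a)]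
    simp only [Equiv.Perm.inv_def, Equiv.symm_apply_apply, Equiv.Perm.mul_apply]
  rw [Finset.sum_congr rfl fun π _ => Finset.sum_congr rfl fun σ _ => h3 π σ]
  have h4 : ∀ π : Equiv.Perm (Fin k),
      (∑ σ : Equiv.Perm (Fin k), ∏ t : Fin k, ∑ a, star (v t a) * v ((σ⁻¹ * π) t) a)
      = ∑ ρ : Equiv.Perm (Fin k), ∏ t : Fin k, ∑ a, star (v t a) * v (ρ t) a := by
    intro π
    exact Fintype.sum_equiv ((Equiv.inv (Equiv.Perm (Fin k))).trans (Equiv.mulRight π))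
      _ _ (fun σ => rfl)
  rw [Finset.sum_congr rfl fun π _ => h4 π, Finset.sum_const, card_univ,
    Fintype.card_perm, Fintype.card_fin, nsmul_eq_mul]

end SumPermAux
end SumPermAuxSection

/-- **Permutation-sum overlap lower bound (Lemma 5.12 of Chen–Cotler–Huang–Li).**
For any unit vectors `ψ_1, …, ψ_T ∈ ℂ^d`, the complex number
`∑_{π ∈ S_T} ∏_{t=1}^T ⟨ψ_t, ψ_{π(t)}⟩` is real and at least 1
(stated via the partial order on `ℂ`). -/
theorem sum_perm_prod_inner_ge_one (d T : ℕ)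
    (ψ : Fin T → EuclideanSpace ℂ (Fin d)) (hψ : ∀ t, ‖ψ t‖ = 1) :
    (1 : ℂ) ≤ ∑ π : Equiv.Perm (Fin T), ∏ t, (inner ℂ (ψ t) (ψ (π t)) : ℂ) := by
  classical
  set v : ℕ → Fin d → ℂ := fun t => if h : t < T then (fun a => ψ ⟨t, h⟩ a) else 0 with hv
  have hinner : ∀ x y : EuclideanSpace ℂ (Fin d),
      (inner ℂ x y : ℂ) = ∑ a, star (x a) * y a := by
    intro x y
    rw [PiLp.inner_apply]
    refine Finset.sum_congr rfl fun a _ => ?_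
    rw [RCLike.inner_apply', starRingEnd_apply]
  have hva : ∀ (t : Fin T) (a : Fin d), v t a = ψ t a := by
    intro t a
    simp only [hv]
    rw [dif_pos t.isLt]
  have hnorm : ∀ t, t < T → ∑ a, star (v t a) * v t a = 1 := by
    intro t ht
    have hvt : ∀ a, v t a = ψ ⟨t, ht⟩ a := by
      intro a; simp only [hv]; rw [dif_pos ht]
    rw [Finset.sum_congr rfl fun a _ => by rw [hvt a], ← hinner,
      inner_self_eq_norm_sq_to_K, hψ]
    norm_num
  have h1 := SumPermAux.nsq_ge d T v hnorm
  have h2 := SumPermAux.nsq_eq v T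
  have h3 : SumPermAux.nsq d v T = (T.factorial : ℂ)
      * ∑ π : Equiv.Perm (Fin T), ∏ t, (inner ℂ (ψ t) (ψ (π t)) : ℂ) := by
    rw [h2]
    congr 1
    refine Finset.sum_congr rfl fun π _ => Finset.prod_congr rfl fun t _ => ?_
    rw [hinner]
    refine Finset.sum_congr rfl fun a _ => ?_
    rw [hva t a, hva (π t) a]
  rw [h3] at h1
  rw [Complex.le_def] at h1
  simp only [Complex.mul_re, Complex.mul_im, Complex.natCast_re, Complex.natCast_im,
    Complex.one_re, Complex.one_im, zero_mul, mul_zero, add_zero, sub_zero,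
    zero_add] at h1
  have hT : (0 : ℝ) < (T.factorial : ℝ) := by positivity
  rw [Complex.le_def]
  simp only [Complex.one_re, Complex.one_im]
  constructor
  · have h5 := h1.1
    nlinarith
  · have h5 := h1.2
    rcases mul_eq_zero.mp h5.symm with h | h
    · exact absurd h hT.ne'
    · exact h.symm
end

section
/- Let M_1, …, M_T be d×d complex matrices each with unit Frobenius norm, ∑_{i,j} |M_t(i,j)|² = 1, each encoding a unit vector ψ_t = ∑_{i,j} M_t(i,j) e_i ⊗ e_j of the bipartite space ℂ^d ⊗ ℂ^d. Then the quantity Q := ∑_{π, σ ∈ S_T} ∑_{i : [T]→[d]} ∑_{j : [T]→[d]} ∏_{t=1}^T M_t(i(t), j(t)) · conj( M_t(i(π(t)), j(σ(t))) ) is a real number and Q ≥ 1. (Q equals ∑_{π,σ ∈ S_T} tr[ (P_d(π) ⊗̃ P_d(σ)) · ⊗_{t=1}^T |ψ_t⟩⟨ψ_t| ], where P_d(π) permutes the T copies of the first tensor factor and P_d(σ) permutes the T copies of the second.) -/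
open scoped ComplexOrder

/-- The double-permutation overlap functional
`Q = ∑_{π,σ ∈ S_T} tr[(P_d(π) ⊗̃ P_d(σ)) · ⊗_t |ψ_t⟩⟨ψ_t|]`, written out explicitly in
coordinates for bipartite states `ψ_t ∈ ℂ^d ⊗ ℂ^d` encoded as `d×d` matrices `M_t`. -/
noncomputable def doubleQ (d T : ℕ) (M : Fin T → Matrix (Fin d) (Fin d) ℂ) : ℂ :=
  ∑ π : Equiv.Perm (Fin T), ∑ σ : Equiv.Perm (Fin T),
    ∑ i : Fin T → Fin d, ∑ j : Fin T → Fin d,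
      ∏ t, M t (i t) (j t) * (starRingEnd ℂ) (M t (i (π t)) (j (σ t)))


namespace DQaux

open Finset Function

local notation "conj'" => starRingEnd ℂ


noncomputable def S (T d : ℕ) (g : (Fin T → Fin d) → (Fin T → Fin d) → ℂ) :
    (Fin T → Fin d) → (Fin T → Fin d) → ℂ :=
  fun i j => ∑ π : Equiv.Perm (Fin T), ∑ σ : Equiv.Perm (Fin T), g (i ∘ ⇑π) (j ∘ ⇑σ)

lemma perm_split {T : ℕ} (F : Equiv.Perm (Fin (T+1)) → ℂ) :
    ∑ π, F π = ∑ a : Fin (T+1), ∑ π' : Equiv.Perm (Fin T),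
      F (Equiv.Perm.decomposeFin.symm (a, π')) := by
  rw [← Equiv.sum_comp Equiv.Perm.decomposeFin.symm F, Fintype.sum_prod_type]

lemma S_cons {T d : ℕ} (M : Matrix (Fin d) (Fin d) ℂ)
    (g : (Fin T → Fin d) → (Fin T → Fin d) → ℂ) (i j : Fin (T+1) → Fin d) :
    S (T+1) d (fun i' j' => M (i' 0) (j' 0) * g (i' ∘ Fin.succ) (j' ∘ Fin.succ)) i j
    = ∑ a : Fin (T+1), ∑ b : Fin (T+1), M (i a) (j b)
        * S T d g (i ∘ ⇑(Equiv.swap 0 a) ∘ Fin.succ) (j ∘ ⇑(Equiv.swap 0 b) ∘ Fin.succ) := by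
  unfold S
  rw [perm_split (fun π => ∑ σ : Equiv.Perm (Fin (T+1)),
    M ((i ∘ ⇑π) 0) ((j ∘ ⇑σ) 0) * g ((i ∘ ⇑π) ∘ Fin.succ) ((j ∘ ⇑σ) ∘ Fin.succ))]
  refine Finset.sum_congr rfl fun a _ => ?_
  calc ∑ π' : Equiv.Perm (Fin T), ∑ σ : Equiv.Perm (Fin (T+1)),
        M ((i ∘ ⇑(Equiv.Perm.decomposeFin.symm (a, π'))) 0) ((j ∘ ⇑σ) 0)
          * g ((i ∘ ⇑(Equiv.Perm.decomposeFin.symm (a, π'))) ∘ Fin.succ) ((j ∘ ⇑σ) ∘ Fin.succ)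
      = ∑ π' : Equiv.Perm (Fin T), ∑ b : Fin (T+1), ∑ σ' : Equiv.Perm (Fin T),
        M ((i ∘ ⇑(Equiv.Perm.decomposeFin.symm (a, π'))) 0)
          ((j ∘ ⇑(Equiv.Perm.decomposeFin.symm (b, σ'))) 0)
          * g ((i ∘ ⇑(Equiv.Perm.decomposeFin.symm (a, π'))) ∘ Fin.succ)
              ((j ∘ ⇑(Equiv.Perm.decomposeFin.symm (b, σ'))) ∘ Fin.succ) := by
        refine Finset.sum_congr rfl fun π' _ => ?_
        exact perm_split (fun σ =>
          M ((i ∘ ⇑(Equiv.Perm.decomposeFin.symm (a, π'))) 0) ((j ∘ ⇑σ) 0)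
          * g ((i ∘ ⇑(Equiv.Perm.decomposeFin.symm (a, π'))) ∘ Fin.succ) ((j ∘ ⇑σ) ∘ Fin.succ))
    _ = ∑ b : Fin (T+1), ∑ π' : Equiv.Perm (Fin T), ∑ σ' : Equiv.Perm (Fin T),
        M ((i ∘ ⇑(Equiv.Perm.decomposeFin.symm (a, π'))) 0)
          ((j ∘ ⇑(Equiv.Perm.decomposeFin.symm (b, σ'))) 0)
          * g ((i ∘ ⇑(Equiv.Perm.decomposeFin.symm (a, π'))) ∘ Fin.succ)
              ((j ∘ ⇑(Equiv.Perm.decomposeFin.symm (b, σ'))) ∘ Fin.succ) := Finset.sum_comm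
    _ = ∑ b : Fin (T+1), M (i a) (j b)
        * S T d g (i ∘ ⇑(Equiv.swap 0 a) ∘ Fin.succ) (j ∘ ⇑(Equiv.swap 0 b) ∘ Fin.succ) := by
        refine Finset.sum_congr rfl fun b _ => ?_
        unfold S
        rw [Finset.mul_sum]
        refine Finset.sum_congr rfl fun π' _ => ?_
        rw [Finset.mul_sum]
        refine Finset.sum_congr rfl fun σ' _ => ?_
        have hz1 : (i ∘ ⇑(Equiv.Perm.decomposeFin.symm (a, π'))) 0 = i a := by
          simp [Function.comp]
        have hz2 : (j ∘ ⇑(Equiv.Perm.decomposeFin.symm (b, σ'))) 0 = j b := by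
          simp [Function.comp]
        have hs1 : (i ∘ ⇑(Equiv.Perm.decomposeFin.symm (a, π'))) ∘ Fin.succ
            = (i ∘ ⇑(Equiv.swap 0 a) ∘ Fin.succ) ∘ ⇑π' := by
          ext t
          simp [Function.comp, Equiv.Perm.decomposeFin_symm_apply_succ]
        have hs2 : (j ∘ ⇑(Equiv.Perm.decomposeFin.symm (b, σ'))) ∘ Fin.succ
            = (j ∘ ⇑(Equiv.swap 0 b) ∘ Fin.succ) ∘ ⇑σ' := by
          ext t
          simp [Function.comp, Equiv.Perm.decomposeFin_symm_apply_succ]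
        rw [hz1, hz2, hs1, hs2]

noncomputable def Qf (T d : ℕ) (g : (Fin T → Fin d) → (Fin T → Fin d) → ℂ) : ℂ :=
  ∑ i : Fin T → Fin d, ∑ j : Fin T → Fin d, g i j * conj' (S T d g i j)

noncomputable def R2 (T d : ℕ) (M : Matrix (Fin d) (Fin d) ℂ)
    (g h : (Fin T → Fin d) → (Fin T → Fin d) → ℂ) : ℂ :=
  ∑ b : Fin T, ∑ x : Fin d, ∑ u : Fin T → Fin d, ∑ y : Fin d, ∑ v : Fin T → Fin d,
    M x (v b) * g u (Function.update v b y) * (conj' (M x y) * conj' (h u v))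

noncomputable def R3 (T d : ℕ) (M : Matrix (Fin d) (Fin d) ℂ)
    (g h : (Fin T → Fin d) → (Fin T → Fin d) → ℂ) : ℂ :=
  ∑ a : Fin T, ∑ x : Fin d, ∑ u : Fin T → Fin d, ∑ y : Fin d, ∑ v : Fin T → Fin d,
    M (u a) y * g (Function.update u a x) v * (conj' (M x y) * conj' (h u v))

noncomputable def R4 (T d : ℕ) (M : Matrix (Fin d) (Fin d) ℂ)
    (g h : (Fin T → Fin d) → (Fin T → Fin d) → ℂ) : ℂ :=
  ∑ a : Fin T, ∑ b : Fin T, ∑ x : Fin d, ∑ u : Fin T → Fin d, ∑ y : Fin d, ∑ v : Fin T → Fin d,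
    M (u a) (v b) * g (Function.update u a x) (Function.update v b y)
      * (conj' (M x y) * conj' (h u v))

noncomputable def Ed (T d : ℕ) (M : Matrix (Fin d) (Fin d) ℂ)
    (g : (Fin T → Fin d) → (Fin T → Fin d) → ℂ) (a b : Fin (T+1)) : ℂ :=
  ∑ i : Fin (T+1) → Fin d, ∑ j : Fin (T+1) → Fin d,
    M (i 0) (j 0) * g (i ∘ Fin.succ) (j ∘ Fin.succ)
      * (conj' (M (i a) (j b))
        * conj' (S T d g (i ∘ ⇑(Equiv.swap 0 a) ∘ Fin.succ) (j ∘ ⇑(Equiv.swap 0 b) ∘ Fin.succ)))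

noncomputable def Ed' (T d : ℕ) (M : Matrix (Fin d) (Fin d) ℂ)
    (g : (Fin T → Fin d) → (Fin T → Fin d) → ℂ) (a b : Fin (T+1)) : ℂ :=
  ∑ i : Fin (T+1) → Fin d, ∑ j : Fin (T+1) → Fin d,
    M (i a) (j b) * g (i ∘ ⇑(Equiv.swap 0 a) ∘ Fin.succ) (j ∘ ⇑(Equiv.swap 0 b) ∘ Fin.succ)
      * (conj' (M (i 0) (j 0)) * conj' (S T d g (i ∘ Fin.succ) (j ∘ Fin.succ)))

lemma sum_swap4 {α β γ δ : Type*} [Fintype α] [Fintype β] [Fintype γ] [Fintype δ]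
    (f : α → β → γ → δ → ℂ) :
    ∑ i : α, ∑ j : β, ∑ a : γ, ∑ b : δ, f i j a b
      = ∑ a : γ, ∑ b : δ, ∑ i : α, ∑ j : β, f i j a b := by
  calc ∑ i : α, ∑ j : β, ∑ a : γ, ∑ b : δ, f i j a b
      = ∑ i : α, ∑ a : γ, ∑ j : β, ∑ b : δ, f i j a b :=
        Finset.sum_congr rfl fun i _ => Finset.sum_comm
    _ = ∑ a : γ, ∑ i : α, ∑ j : β, ∑ b : δ, f i j a b := Finset.sum_comm
    _ = ∑ a : γ, ∑ i : α, ∑ b : δ, ∑ j : β, f i j a b :=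
        Finset.sum_congr rfl fun a _ => Finset.sum_congr rfl fun i _ => Finset.sum_comm
    _ = ∑ a : γ, ∑ b : δ, ∑ i : α, ∑ j : β, f i j a b :=
        Finset.sum_congr rfl fun a _ => Finset.sum_comm

lemma Qf_expand (T d : ℕ) (M : Matrix (Fin d) (Fin d) ℂ)
    (g : (Fin T → Fin d) → (Fin T → Fin d) → ℂ) :
    Qf (T+1) d (fun i j => M (i 0) (j 0) * g (i ∘ Fin.succ) (j ∘ Fin.succ))
    = ∑ a : Fin (T+1), ∑ b : Fin (T+1), Ed T d M g a b := by
  unfold Qf Ed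
  rw [← sum_swap4 (fun i j a b =>
    M (i 0) (j 0) * g (i ∘ Fin.succ) (j ∘ Fin.succ)
      * (conj' (M (i a) (j b))
        * conj' (S T d g (i ∘ ⇑(Equiv.swap 0 a) ∘ Fin.succ)
            (j ∘ ⇑(Equiv.swap 0 b) ∘ Fin.succ))))]
  refine Finset.sum_congr rfl fun i _ => Finset.sum_congr rfl fun j _ => ?_
  rw [S_cons M g i j]
  rw [map_sum, Finset.mul_sum]
  refine Finset.sum_congr rfl fun a _ => ?_
  rw [map_sum, Finset.mul_sum]
  refine Finset.sum_congr rfl fun b _ => ?_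
  rw [map_mul]

lemma sum_precomp {T d : ℕ} (e : Equiv.Perm (Fin T)) (F : (Fin T → Fin d) → ℂ) :
    ∑ i : Fin T → Fin d, F (i ∘ ⇑e) = ∑ i : Fin T → Fin d, F i := by
  apply Fintype.sum_bijective (fun i : Fin T → Fin d => i ∘ ⇑e)
  · rw [Function.bijective_iff_has_inverse]
    exact ⟨fun i => i ∘ ⇑e.symm, fun i => by ext t; simp, fun i => by ext t; simp⟩
  · intro i; rfl

lemma Ed_eq_Ed' (T d : ℕ) (M : Matrix (Fin d) (Fin d) ℂ)
    (g : (Fin T → Fin d) → (Fin T → Fin d) → ℂ) (a b : Fin (T+1)) :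
    Ed T d M g a b = Ed' T d M g a b := by
  unfold Ed Ed'
  rw [← sum_precomp (Equiv.swap 0 a) (fun i => ∑ j : Fin (T+1) → Fin d,
    M (i a) (j b) * g (i ∘ ⇑(Equiv.swap 0 a) ∘ Fin.succ) (j ∘ ⇑(Equiv.swap 0 b) ∘ Fin.succ)
      * (conj' (M (i 0) (j 0)) * conj' (S T d g (i ∘ Fin.succ) (j ∘ Fin.succ))))]
  refine Finset.sum_congr rfl fun i _ => ?_
  rw [← sum_precomp (Equiv.swap 0 b) (fun j =>
    M ((i ∘ ⇑(Equiv.swap 0 a)) a) (j b)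
      * g ((i ∘ ⇑(Equiv.swap 0 a)) ∘ ⇑(Equiv.swap 0 a) ∘ Fin.succ)
          (j ∘ ⇑(Equiv.swap 0 b) ∘ Fin.succ)
      * (conj' (M ((i ∘ ⇑(Equiv.swap 0 a)) 0) (j 0))
        * conj' (S T d g ((i ∘ ⇑(Equiv.swap 0 a)) ∘ Fin.succ) (j ∘ Fin.succ))))]
  refine Finset.sum_congr rfl fun j _ => ?_
  have hia : (i ∘ ⇑(Equiv.swap 0 a)) a = i 0 := by simp [Function.comp]
  have hi0 : (i ∘ ⇑(Equiv.swap 0 a)) 0 = i a := by simp [Function.comp]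
  have hja : (j ∘ ⇑(Equiv.swap 0 b)) b = j 0 := by simp [Function.comp]
  have hj0 : (j ∘ ⇑(Equiv.swap 0 b)) 0 = j b := by simp [Function.comp]
  have hii : (i ∘ ⇑(Equiv.swap 0 a)) ∘ ⇑(Equiv.swap 0 a) ∘ Fin.succ = i ∘ Fin.succ := by
    ext t; simp [Function.comp]
  have hjj : (j ∘ ⇑(Equiv.swap 0 b)) ∘ ⇑(Equiv.swap 0 b) ∘ Fin.succ = j ∘ Fin.succ := by
    ext t; simp [Function.comp]
  rw [hia, hi0, hja, hj0, hii, hjj]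
  rfl

lemma cons_split {T d : ℕ} (F : (Fin (T+1) → Fin d) → ℂ) :
    ∑ i, F i = ∑ x : Fin d, ∑ u : Fin T → Fin d, F (Fin.cons x u) := by
  rw [← Equiv.sum_comp (Fin.consEquiv (fun _ : Fin (T+1) => Fin d)) F,
    Fintype.sum_prod_type (fun p : Fin d × (Fin T → Fin d) =>
      F ((Fin.consEquiv (fun _ : Fin (T+1) => Fin d)) p))]
  rfl

lemma cons_comp_succ {T d : ℕ} (x : Fin d) (u : Fin T → Fin d) :
    (Fin.cons x u : Fin (T+1) → Fin d) ∘ Fin.succ = u := by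
  ext t; simp

lemma cons_comp_swap {T d : ℕ} (x : Fin d) (u : Fin T → Fin d) (a : Fin T) :
    (Fin.cons x u : Fin (T+1) → Fin d) ∘ ⇑(Equiv.swap 0 a.succ) ∘ Fin.succ
      = Function.update u a x := by
  ext t
  rcases eq_or_ne t a with h | h
  · subst h
    simp [Equiv.swap_apply_right]
  · have h1 : (t.succ : Fin (T+1)) ≠ 0 := Fin.succ_ne_zero t
    have h2 : (t.succ : Fin (T+1)) ≠ a.succ := by
      simpa using (Fin.succ_injective T).ne h
    simp [Function.comp, Equiv.swap_apply_of_ne_of_ne h1 h2, Function.update_of_ne h]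

lemma comp_swap_zero {T d : ℕ} (i : Fin (T+1) → Fin d) :
    i ∘ ⇑(Equiv.swap (0 : Fin (T+1)) 0) ∘ Fin.succ = i ∘ Fin.succ := by
  ext t; simp [Function.comp]

lemma case00 (T d : ℕ) (M : Matrix (Fin d) (Fin d) ℂ)
    (g : (Fin T → Fin d) → (Fin T → Fin d) → ℂ) :
    Ed' T d M g 0 0 = (∑ x, ∑ y, M x y * conj' (M x y)) * Qf T d g := by
  unfold Ed'
  have h1 : ∀ i j : Fin (T+1) → Fin d,
      M (i 0) (j 0) * g (i ∘ ⇑(Equiv.swap 0 0) ∘ Fin.succ) (j ∘ ⇑(Equiv.swap 0 0) ∘ Fin.succ)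
        * (conj' (M (i 0) (j 0)) * conj' (S T d g (i ∘ Fin.succ) (j ∘ Fin.succ)))
      = (M (i 0) (j 0) * conj' (M (i 0) (j 0)))
        * (g (i ∘ Fin.succ) (j ∘ Fin.succ) * conj' (S T d g (i ∘ Fin.succ) (j ∘ Fin.succ))) := by
    intro i j
    rw [comp_swap_zero i, comp_swap_zero j]
    ring
  calc ∑ i : Fin (T+1) → Fin d, ∑ j : Fin (T+1) → Fin d,
        M (i 0) (j 0) * g (i ∘ ⇑(Equiv.swap 0 0) ∘ Fin.succ) (j ∘ ⇑(Equiv.swap 0 0) ∘ Fin.succ)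
          * (conj' (M (i 0) (j 0)) * conj' (S T d g (i ∘ Fin.succ) (j ∘ Fin.succ)))
      = ∑ i : Fin (T+1) → Fin d, ∑ j : Fin (T+1) → Fin d,
        (M (i 0) (j 0) * conj' (M (i 0) (j 0)))
          * (g (i ∘ Fin.succ) (j ∘ Fin.succ)
            * conj' (S T d g (i ∘ Fin.succ) (j ∘ Fin.succ))) :=
        Finset.sum_congr rfl fun i _ => Finset.sum_congr rfl fun j _ => h1 i j
    _ = ∑ x : Fin d, ∑ u : Fin T → Fin d, ∑ y : Fin d, ∑ v : Fin T → Fin d,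
        (M x y * conj' (M x y)) * (g u v * conj' (S T d g u v)) := by
        rw [cons_split (fun i => ∑ j : Fin (T+1) → Fin d,
          (M (i 0) (j 0) * conj' (M (i 0) (j 0)))
            * (g (i ∘ Fin.succ) (j ∘ Fin.succ)
              * conj' (S T d g (i ∘ Fin.succ) (j ∘ Fin.succ))))]
        refine Finset.sum_congr rfl fun x _ => Finset.sum_congr rfl fun u _ => ?_
        simp only [Fin.cons_zero, cons_comp_succ]
        rw [cons_split (fun j =>
          (M x (j 0) * conj' (M x (j 0)))
            * (g u (j ∘ Fin.succ) * conj' (S T d g u (j ∘ Fin.succ))))]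
        refine Finset.sum_congr rfl fun y _ => Finset.sum_congr rfl fun v _ => ?_
        simp only [Fin.cons_zero, cons_comp_succ]
    _ = ∑ x : Fin d, ∑ y : Fin d, ∑ u : Fin T → Fin d, ∑ v : Fin T → Fin d,
        (M x y * conj' (M x y)) * (g u v * conj' (S T d g u v)) :=
        Finset.sum_congr rfl fun x _ => Finset.sum_comm
    _ = (∑ x, ∑ y, M x y * conj' (M x y)) * Qf T d g := by
        unfold Qf
        simp only [← Finset.mul_sum, ← Finset.sum_mul]

lemma case2 (T d : ℕ) (M : Matrix (Fin d) (Fin d) ℂ)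
    (g : (Fin T → Fin d) → (Fin T → Fin d) → ℂ) :
    ∑ b : Fin T, Ed' T d M g 0 b.succ = R2 T d M g (S T d g) := by
  unfold Ed' R2
  refine Finset.sum_congr rfl fun b _ => ?_
  rw [cons_split (fun i => ∑ j : Fin (T+1) → Fin d,
    M (i 0) (j b.succ) * g (i ∘ ⇑(Equiv.swap 0 0) ∘ Fin.succ)
        (j ∘ ⇑(Equiv.swap 0 b.succ) ∘ Fin.succ)
      * (conj' (M (i 0) (j 0)) * conj' (S T d g (i ∘ Fin.succ) (j ∘ Fin.succ))))]
  refine Finset.sum_congr rfl fun x _ => Finset.sum_congr rfl fun u _ => ?_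
  simp only [Fin.cons_zero, comp_swap_zero, cons_comp_succ]
  rw [cons_split (fun j =>
    M x (j b.succ) * g u (j ∘ ⇑(Equiv.swap 0 b.succ) ∘ Fin.succ)
      * (conj' (M x (j 0)) * conj' (S T d g u (j ∘ Fin.succ))))]
  refine Finset.sum_congr rfl fun y _ => Finset.sum_congr rfl fun v _ => ?_
  simp only [Fin.cons_zero, Fin.cons_succ, cons_comp_succ, cons_comp_swap]

lemma case3 (T d : ℕ) (M : Matrix (Fin d) (Fin d) ℂ)
    (g : (Fin T → Fin d) → (Fin T → Fin d) → ℂ) :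
    ∑ a : Fin T, Ed' T d M g a.succ 0 = R3 T d M g (S T d g) := by
  unfold Ed' R3
  refine Finset.sum_congr rfl fun a _ => ?_
  rw [cons_split (fun i => ∑ j : Fin (T+1) → Fin d,
    M (i a.succ) (j 0) * g (i ∘ ⇑(Equiv.swap 0 a.succ) ∘ Fin.succ)
        (j ∘ ⇑(Equiv.swap 0 0) ∘ Fin.succ)
      * (conj' (M (i 0) (j 0)) * conj' (S T d g (i ∘ Fin.succ) (j ∘ Fin.succ))))]
  refine Finset.sum_congr rfl fun x _ => Finset.sum_congr rfl fun u _ => ?_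
  simp only [Fin.cons_zero, Fin.cons_succ, comp_swap_zero, cons_comp_succ, cons_comp_swap]
  rw [cons_split (fun j =>
    M (u a) (j 0) * g (Function.update u a x) (j ∘ Fin.succ)
      * (conj' (M x (j 0)) * conj' (S T d g u (j ∘ Fin.succ))))]
  refine Finset.sum_congr rfl fun y _ => Finset.sum_congr rfl fun v _ => ?_
  simp only [Fin.cons_zero, cons_comp_succ]

lemma case4 (T d : ℕ) (M : Matrix (Fin d) (Fin d) ℂ)
    (g : (Fin T → Fin d) → (Fin T → Fin d) → ℂ) :
    ∑ a : Fin T, ∑ b : Fin T, Ed' T d M g a.succ b.succ = R4 T d M g (S T d g) := by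
  unfold Ed' R4
  refine Finset.sum_congr rfl fun a _ => Finset.sum_congr rfl fun b _ => ?_
  rw [cons_split (fun i => ∑ j : Fin (T+1) → Fin d,
    M (i a.succ) (j b.succ) * g (i ∘ ⇑(Equiv.swap 0 a.succ) ∘ Fin.succ)
        (j ∘ ⇑(Equiv.swap 0 b.succ) ∘ Fin.succ)
      * (conj' (M (i 0) (j 0)) * conj' (S T d g (i ∘ Fin.succ) (j ∘ Fin.succ))))]
  refine Finset.sum_congr rfl fun x _ => Finset.sum_congr rfl fun u _ => ?_
  simp only [Fin.cons_zero, Fin.cons_succ, cons_comp_succ, cons_comp_swap]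
  rw [cons_split (fun j =>
    M (u a) (j b.succ) * g (Function.update u a x) (j ∘ ⇑(Equiv.swap 0 b.succ) ∘ Fin.succ)
      * (conj' (M x (j 0)) * conj' (S T d g u (j ∘ Fin.succ))))]
  refine Finset.sum_congr rfl fun y _ => Finset.sum_congr rfl fun v _ => ?_
  simp only [Fin.cons_zero, Fin.cons_succ, cons_comp_succ, cons_comp_swap]

lemma decomp (T d : ℕ) (M : Matrix (Fin d) (Fin d) ℂ)
    (g : (Fin T → Fin d) → (Fin T → Fin d) → ℂ) :
    Qf (T+1) d (fun i j => M (i 0) (j 0) * g (i ∘ Fin.succ) (j ∘ Fin.succ))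
    = (∑ x, ∑ y, M x y * conj' (M x y)) * Qf T d g
      + R2 T d M g (S T d g) + R3 T d M g (S T d g) + R4 T d M g (S T d g) := by
  rw [Qf_expand]
  have step : ∑ a : Fin (T+1), ∑ b : Fin (T+1), Ed T d M g a b
      = ∑ a : Fin (T+1), ∑ b : Fin (T+1), Ed' T d M g a b :=
    Finset.sum_congr rfl fun a _ => Finset.sum_congr rfl fun b _ => Ed_eq_Ed' T d M g a b
  rw [step]
  rw [Fin.sum_univ_succ (fun a => ∑ b : Fin (T+1), Ed' T d M g a b)]
  rw [Fin.sum_univ_succ (fun b => Ed' T d M g 0 b)]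
  have h3 : ∑ a : Fin T, ∑ b : Fin (T+1), Ed' T d M g a.succ b
      = ∑ a : Fin T, Ed' T d M g a.succ 0
        + ∑ a : Fin T, ∑ b : Fin T, Ed' T d M g a.succ b.succ := by
    rw [← Finset.sum_add_distrib]
    exact Finset.sum_congr rfl fun a _ =>
      Fin.sum_univ_succ (fun b => Ed' T d M g a.succ b)
  rw [h3, case00, case2, case3, case4]
  ring

lemma S_comp {T d : ℕ} (g : (Fin T → Fin d) → (Fin T → Fin d) → ℂ)
    (π₀ σ₀ : Equiv.Perm (Fin T)) (i j : Fin T → Fin d) :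
    S T d g (i ∘ ⇑π₀) (j ∘ ⇑σ₀) = S T d g i j := by
  unfold S
  have h1 : ∀ (F : Equiv.Perm (Fin T) → ℂ) (τ₀ : Equiv.Perm (Fin T)),
      ∑ π, F (τ₀ * π) = ∑ π, F π := by
    intro F τ₀
    exact Equiv.sum_comp (Equiv.mulLeft τ₀) F
  calc ∑ π : Equiv.Perm (Fin T), ∑ σ : Equiv.Perm (Fin T), g ((i ∘ ⇑π₀) ∘ ⇑π) ((j ∘ ⇑σ₀) ∘ ⇑σ)
      = ∑ π : Equiv.Perm (Fin T), ∑ σ : Equiv.Perm (Fin T), g (i ∘ ⇑(π₀ * π)) (j ∘ ⇑(σ₀ * σ)) := rfl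
    _ = ∑ π : Equiv.Perm (Fin T), ∑ σ : Equiv.Perm (Fin T), g (i ∘ ⇑π) (j ∘ ⇑σ) := by
        rw [h1 (fun π => ∑ σ, g (i ∘ ⇑π) (j ∘ ⇑(σ₀ * σ)))]
        exact Finset.sum_congr rfl fun π _ => h1 (fun σ => g (i ∘ ⇑π) (j ∘ ⇑σ)) σ₀

lemma S_S {T d : ℕ} (g : (Fin T → Fin d) → (Fin T → Fin d) → ℂ) (i j : Fin T → Fin d) :
    S T d (S T d g) i j = ((T.factorial : ℂ))^2 * S T d g i j := by
  have : S T d (S T d g) i j = ∑ _π : Equiv.Perm (Fin T), ∑ _σ : Equiv.Perm (Fin T), S T d g i j := by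
    unfold S; exact Finset.sum_congr rfl fun π _ => Finset.sum_congr rfl fun σ _ => S_comp g π σ i j
  rw [this]
  simp [Finset.sum_const, Fintype.card_perm, Fintype.card_fin, sq]
  ring


lemma overcount {T d : ℕ} (b : Fin T) (F : (Fin T → Fin d) → ℂ) :
    ∑ e : Fin d, ∑ v : Fin T → Fin d, F (Function.update v b e)
      = (d : ℂ) * ∑ v, F v := by
  have hinv : Function.Involutive
      (fun p : (Fin T → Fin d) × Fin d => (Function.update p.1 b p.2, p.1 b)) := by
    intro p
    ext t
    · by_cases h : t = b
      · subst h; simp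
      · simp [Function.update_of_ne h]
    · simp
  have step : ∑ p : (Fin T → Fin d) × Fin d, F (Function.update p.1 b p.2)
      = ∑ p : (Fin T → Fin d) × Fin d, F p.1 := by
    have := Equiv.sum_comp hinv.toPerm (fun p => F p.1)
    simpa [Function.Involutive.coe_toPerm] using this
  calc ∑ e : Fin d, ∑ v : Fin T → Fin d, F (Function.update v b e)
      = ∑ v : Fin T → Fin d, ∑ e : Fin d, F (Function.update v b e) := Finset.sum_comm
    _ = ∑ p : (Fin T → Fin d) × Fin d, F (Function.update p.1 b p.2) :=
        (Fintype.sum_prod_type (fun p : (Fin T → Fin d) × Fin d =>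
            F (Function.update p.1 b p.2))).symm
    _ = ∑ p : (Fin T → Fin d) × Fin d, F p.1 := step
    _ = ∑ v : Fin T → Fin d, ∑ _e : Fin d, F v :=
        Fintype.sum_prod_type (fun p : (Fin T → Fin d) × Fin d => F p.1)
    _ = (d : ℂ) * ∑ v, F v := by
        simp [Finset.sum_const, Finset.mul_sum, Fintype.card_fin]

lemma cast_nonneg' (r : ℝ) (h : 0 ≤ r) : (0:ℂ) ≤ (r:ℂ) := by
  rw [show (0:ℂ) = ((0:ℝ):ℂ) from rfl, Complex.real_le_real]; exact h


lemma nonneg_of_cast_mul {d : ℕ} {z : ℂ} (h : 0 ≤ (d:ℂ) * z) (h0 : d = 0 → z = 0) :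
    0 ≤ z := by
  rcases Nat.eq_zero_or_pos d with hd | hd
  · rw [h0 hd]
  · have hdne : ((d:ℂ)) ≠ 0 := by exact_mod_cast hd.ne'
    have hz : z = ((d:ℂ))⁻¹ * ((d:ℂ) * z) := by field_simp
    rw [hz]
    refine mul_nonneg ?_ h
    have hh : ((d:ℂ))⁻¹ = (((d:ℝ)⁻¹ : ℝ) : ℂ) := by push_cast; ring
    rw [hh]
    exact cast_nonneg' _ (by positivity)


lemma pos2 (T d : ℕ) (M : Matrix (Fin d) (Fin d) ℂ) (k) :
    0 ≤ R2 T d M k k := by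
  classical
  -- the inner quadratic-form identity
  have inner : ∀ (b : Fin T) (x : Fin d) (u : Fin T → Fin d),
      (d:ℂ) * (∑ y : Fin d, ∑ v : Fin T → Fin d,
          M x (v b) * k u (Function.update v b y) * (conj' (M x y) * conj' (k u v)))
      = ∑ v : Fin T → Fin d,
          conj' (∑ y, conj' (M x y) * k u (Function.update v b y))
            * (∑ y, conj' (M x y) * k u (Function.update v b y)) := by
    intro b x u
    rw [Finset.sum_comm]
    rw [← overcount b (fun v => ∑ y : Fin d,
        M x (v b) * k u (Function.update v b y) * (conj' (M x y) * conj' (k u v)))]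
    have hpt : ∀ (e : Fin d) (v : Fin T → Fin d),
        (∑ y : Fin d, M x ((Function.update v b e) b)
            * k u (Function.update (Function.update v b e) b y)
            * (conj' (M x y) * conj' (k u (Function.update v b e))))
        = ∑ y : Fin d, (M x e * conj' (k u (Function.update v b e)))
            * (conj' (M x y) * k u (Function.update v b y)) := by
      intro e v
      refine Finset.sum_congr rfl fun y _ => ?_
      rw [Function.update_self, Function.update_idem]
      ring
    calc ∑ e : Fin d, ∑ v : Fin T → Fin d, (∑ y : Fin d,
            M x ((Function.update v b e) b)
            * k u (Function.update (Function.update v b e) b y)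
            * (conj' (M x y) * conj' (k u (Function.update v b e))))
        = ∑ e : Fin d, ∑ v : Fin T → Fin d, ∑ y : Fin d,
            (M x e * conj' (k u (Function.update v b e)))
            * (conj' (M x y) * k u (Function.update v b y)) := by
          exact Finset.sum_congr rfl fun e _ => Finset.sum_congr rfl fun v _ => hpt e v
      _ = ∑ v : Fin T → Fin d, ∑ e : Fin d, ∑ y : Fin d,
            (M x e * conj' (k u (Function.update v b e)))
            * (conj' (M x y) * k u (Function.update v b y)) := Finset.sum_comm
      _ = ∑ v : Fin T → Fin d,
            conj' (∑ y, conj' (M x y) * k u (Function.update v b y))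
              * (∑ y, conj' (M x y) * k u (Function.update v b y)) := by
          refine Finset.sum_congr rfl fun v _ => ?_
          rw [← Finset.sum_mul_sum]
          rw [map_sum]
          simp only [map_mul, Complex.conj_conj]
  -- conclude
  have key : (d:ℂ) * R2 T d M k k = ∑ b : Fin T, ∑ x : Fin d, ∑ u : Fin T → Fin d,
      ∑ v : Fin T → Fin d,
        conj' (∑ y, conj' (M x y) * k u (Function.update v b y))
          * (∑ y, conj' (M x y) * k u (Function.update v b y)) := by
    unfold R2
    rw [Finset.mul_sum]
    refine Finset.sum_congr rfl fun b _ => ?_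
    rw [Finset.mul_sum]
    refine Finset.sum_congr rfl fun x _ => ?_
    rw [Finset.mul_sum]
    refine Finset.sum_congr rfl fun u _ => ?_
    exact inner b x u
  have hpos : 0 ≤ (d:ℂ) * R2 T d M k k := by
    rw [key]
    refine Finset.sum_nonneg fun b _ => Finset.sum_nonneg fun x _ =>
      Finset.sum_nonneg fun u _ => Finset.sum_nonneg fun v _ => ?_
    exact star_mul_self_nonneg _
  rcases Nat.eq_zero_or_pos d with hd | hd
  · subst hd
    have : R2 T 0 M k k = 0 := by
      unfold R2
      simp
    rw [this]
  · have hdne : ((d:ℂ)) ≠ 0 := by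
      exact_mod_cast hd.ne'
    have : R2 T d M k k = ((d:ℂ))⁻¹ * ((d:ℂ) * R2 T d M k k) := by
      field_simp
    rw [this]
    refine mul_nonneg ?_ hpos
    have h : ((d:ℂ))⁻¹ = (((d:ℝ)⁻¹ : ℝ) : ℂ) := by push_cast; ring
    rw [h]
    exact cast_nonneg' _ (by positivity)

lemma pos3 (T d : ℕ) (M : Matrix (Fin d) (Fin d) ℂ) (k) :
    0 ≤ R3 T d M k k := by
  classical
  -- reorder : R3 = ∑ a ∑ y ∑ v ∑ u ∑ x
  have hre : R3 T d M k k = ∑ a : Fin T, ∑ y : Fin d, ∑ v : Fin T → Fin d,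
      ∑ u : Fin T → Fin d, ∑ x : Fin d,
        M (u a) y * k (Function.update u a x) v * (conj' (M x y) * conj' (k u v)) := by
    unfold R3
    refine Finset.sum_congr rfl fun a _ => ?_
    calc ∑ x : Fin d, ∑ u : Fin T → Fin d, ∑ y : Fin d, ∑ v : Fin T → Fin d,
            M (u a) y * k (Function.update u a x) v * (conj' (M x y) * conj' (k u v))
        = ∑ x : Fin d, ∑ y : Fin d, ∑ u : Fin T → Fin d, ∑ v : Fin T → Fin d,
            M (u a) y * k (Function.update u a x) v * (conj' (M x y) * conj' (k u v)) :=
          Finset.sum_congr rfl fun x _ => Finset.sum_comm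
      _ = ∑ y : Fin d, ∑ x : Fin d, ∑ u : Fin T → Fin d, ∑ v : Fin T → Fin d,
            M (u a) y * k (Function.update u a x) v * (conj' (M x y) * conj' (k u v)) :=
          Finset.sum_comm
      _ = ∑ y : Fin d, ∑ x : Fin d, ∑ v : Fin T → Fin d, ∑ u : Fin T → Fin d,
            M (u a) y * k (Function.update u a x) v * (conj' (M x y) * conj' (k u v)) :=
          Finset.sum_congr rfl fun y _ => Finset.sum_congr rfl fun x _ => Finset.sum_comm
      _ = ∑ y : Fin d, ∑ v : Fin T → Fin d, ∑ x : Fin d, ∑ u : Fin T → Fin d,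
            M (u a) y * k (Function.update u a x) v * (conj' (M x y) * conj' (k u v)) :=
          Finset.sum_congr rfl fun y _ => Finset.sum_comm
      _ = ∑ y : Fin d, ∑ v : Fin T → Fin d, ∑ u : Fin T → Fin d, ∑ x : Fin d,
            M (u a) y * k (Function.update u a x) v * (conj' (M x y) * conj' (k u v)) :=
          Finset.sum_congr rfl fun y _ => Finset.sum_congr rfl fun v _ => Finset.sum_comm
  have inner : ∀ (a : Fin T) (y : Fin d) (v : Fin T → Fin d),
      (d:ℂ) * (∑ u : Fin T → Fin d, ∑ x : Fin d,
          M (u a) y * k (Function.update u a x) v * (conj' (M x y) * conj' (k u v)))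
      = ∑ u : Fin T → Fin d,
          conj' (∑ x, conj' (M x y) * k (Function.update u a x) v)
            * (∑ x, conj' (M x y) * k (Function.update u a x) v) := by
    intro a y v
    rw [← overcount a (fun u => ∑ x : Fin d,
        M (u a) y * k (Function.update u a x) v * (conj' (M x y) * conj' (k u v)))]
    calc ∑ e : Fin d, ∑ u : Fin T → Fin d, (∑ x : Fin d,
            M ((Function.update u a e) a) y
            * k (Function.update (Function.update u a e) a x) v
            * (conj' (M x y) * conj' (k (Function.update u a e) v)))
        = ∑ e : Fin d, ∑ u : Fin T → Fin d, ∑ x : Fin d,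
            (M e y * conj' (k (Function.update u a e) v))
            * (conj' (M x y) * k (Function.update u a x) v) := by
          refine Finset.sum_congr rfl fun e _ => Finset.sum_congr rfl fun u _ =>
            Finset.sum_congr rfl fun x _ => ?_
          rw [Function.update_self, Function.update_idem]
          ring
      _ = ∑ u : Fin T → Fin d, ∑ e : Fin d, ∑ x : Fin d,
            (M e y * conj' (k (Function.update u a e) v))
            * (conj' (M x y) * k (Function.update u a x) v) := Finset.sum_comm
      _ = ∑ u : Fin T → Fin d,
            conj' (∑ x, conj' (M x y) * k (Function.update u a x) v)
              * (∑ x, conj' (M x y) * k (Function.update u a x) v) := by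
          refine Finset.sum_congr rfl fun u _ => ?_
          rw [← Finset.sum_mul_sum, map_sum]
          simp only [map_mul, Complex.conj_conj]
  have key : (d:ℂ) * R3 T d M k k = ∑ a : Fin T, ∑ y : Fin d, ∑ v : Fin T → Fin d,
      ∑ u : Fin T → Fin d,
        conj' (∑ x, conj' (M x y) * k (Function.update u a x) v)
          * (∑ x, conj' (M x y) * k (Function.update u a x) v) := by
    rw [hre, Finset.mul_sum]
    refine Finset.sum_congr rfl fun a _ => ?_
    rw [Finset.mul_sum]
    refine Finset.sum_congr rfl fun y _ => ?_
    rw [Finset.mul_sum]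
    refine Finset.sum_congr rfl fun v _ => ?_
    exact inner a y v
  refine nonneg_of_cast_mul (d := d) ?_ ?_
  · rw [key]
    refine Finset.sum_nonneg fun a _ => Finset.sum_nonneg fun y _ =>
      Finset.sum_nonneg fun v _ => Finset.sum_nonneg fun u _ => ?_
    exact star_mul_self_nonneg _
  · intro hd
    subst hd
    unfold R3
    simp

lemma pos4 (T d : ℕ) (M : Matrix (Fin d) (Fin d) ℂ) (k) :
    0 ≤ R4 T d M k k := by
  classical
  -- reorder : R4 = ∑ a ∑ b ∑ u ∑ v ∑ x ∑ y
  have hre : R4 T d M k k = ∑ a : Fin T, ∑ b : Fin T,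
      ∑ u : Fin T → Fin d, ∑ v : Fin T → Fin d, ∑ x : Fin d, ∑ y : Fin d,
        M (u a) (v b) * k (Function.update u a x) (Function.update v b y)
          * (conj' (M x y) * conj' (k u v)) := by
    unfold R4
    refine Finset.sum_congr rfl fun a _ => Finset.sum_congr rfl fun b _ => ?_
    calc ∑ x : Fin d, ∑ u : Fin T → Fin d, ∑ y : Fin d, ∑ v : Fin T → Fin d,
            M (u a) (v b) * k (Function.update u a x) (Function.update v b y)
              * (conj' (M x y) * conj' (k u v))
        = ∑ u : Fin T → Fin d, ∑ x : Fin d, ∑ y : Fin d, ∑ v : Fin T → Fin d,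
            M (u a) (v b) * k (Function.update u a x) (Function.update v b y)
              * (conj' (M x y) * conj' (k u v)) := Finset.sum_comm
      _ = ∑ u : Fin T → Fin d, ∑ x : Fin d, ∑ v : Fin T → Fin d, ∑ y : Fin d,
            M (u a) (v b) * k (Function.update u a x) (Function.update v b y)
              * (conj' (M x y) * conj' (k u v)) :=
          Finset.sum_congr rfl fun u _ => Finset.sum_congr rfl fun x _ => Finset.sum_comm
      _ = ∑ u : Fin T → Fin d, ∑ v : Fin T → Fin d, ∑ x : Fin d, ∑ y : Fin d,
            M (u a) (v b) * k (Function.update u a x) (Function.update v b y)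
              * (conj' (M x y) * conj' (k u v)) :=
          Finset.sum_congr rfl fun u _ => Finset.sum_comm
  have inner : ∀ (a b : Fin T),
      ((d:ℂ)) * (((d:ℂ)) * (∑ u : Fin T → Fin d, ∑ v : Fin T → Fin d, ∑ x : Fin d, ∑ y : Fin d,
          M (u a) (v b) * k (Function.update u a x) (Function.update v b y)
            * (conj' (M x y) * conj' (k u v))))
      = ∑ u : Fin T → Fin d, ∑ v : Fin T → Fin d,
          conj' (∑ x : Fin d, ∑ y : Fin d,
              conj' (M x y) * k (Function.update u a x) (Function.update v b y))
            * (∑ x : Fin d, ∑ y : Fin d,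
              conj' (M x y) * k (Function.update u a x) (Function.update v b y)) := by
    intro a b
    rw [← overcount a (fun u => ∑ v : Fin T → Fin d, ∑ x : Fin d, ∑ y : Fin d,
        M (u a) (v b) * k (Function.update u a x) (Function.update v b y)
          * (conj' (M x y) * conj' (k u v)))]
    rw [Finset.mul_sum]
    calc ∑ e : Fin d, ((d:ℂ) * ∑ u : Fin T → Fin d, ∑ v : Fin T → Fin d, ∑ x : Fin d, ∑ y : Fin d,
            M ((Function.update u a e) a) (v b)
            * k (Function.update (Function.update u a e) a x) (Function.update v b y)
            * (conj' (M x y) * conj' (k (Function.update u a e) v)))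
        = ∑ e : Fin d, ∑ u : Fin T → Fin d, ((d:ℂ) * ∑ v : Fin T → Fin d, ∑ x : Fin d, ∑ y : Fin d,
            M ((Function.update u a e) a) (v b)
            * k (Function.update (Function.update u a e) a x) (Function.update v b y)
            * (conj' (M x y) * conj' (k (Function.update u a e) v))) := by
          refine Finset.sum_congr rfl fun e _ => ?_
          rw [Finset.mul_sum]
      _ = ∑ e : Fin d, ∑ u : Fin T → Fin d, ∑ f : Fin d, ∑ v : Fin T → Fin d, ∑ x : Fin d, ∑ y : Fin d,
            M ((Function.update u a e) a) ((Function.update v b f) b)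
            * k (Function.update (Function.update u a e) a x)
                (Function.update (Function.update v b f) b y)
            * (conj' (M x y) * conj' (k (Function.update u a e) (Function.update v b f))) := by
          refine Finset.sum_congr rfl fun e _ => Finset.sum_congr rfl fun u _ => ?_
          rw [← overcount b (fun v => ∑ x : Fin d, ∑ y : Fin d,
            M ((Function.update u a e) a) (v b)
            * k (Function.update (Function.update u a e) a x) (Function.update v b y)
            * (conj' (M x y) * conj' (k (Function.update u a e) v)))]
      _ = ∑ e : Fin d, ∑ u : Fin T → Fin d, ∑ f : Fin d, ∑ v : Fin T → Fin d, ∑ x : Fin d, ∑ y : Fin d,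
            (M e f * conj' (k (Function.update u a e) (Function.update v b f)))
            * (conj' (M x y) * k (Function.update u a x) (Function.update v b y)) := by
          refine Finset.sum_congr rfl fun e _ => Finset.sum_congr rfl fun u _ =>
            Finset.sum_congr rfl fun f _ => Finset.sum_congr rfl fun v _ =>
            Finset.sum_congr rfl fun x _ => Finset.sum_congr rfl fun y _ => ?_
          rw [Function.update_self, Function.update_self, Function.update_idem,
            Function.update_idem]
          ring
      _ = ∑ u : Fin T → Fin d, ∑ e : Fin d, ∑ f : Fin d, ∑ v : Fin T → Fin d, ∑ x : Fin d, ∑ y : Fin d,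
            (M e f * conj' (k (Function.update u a e) (Function.update v b f)))
            * (conj' (M x y) * k (Function.update u a x) (Function.update v b y)) :=
          Finset.sum_comm
      _ = ∑ u : Fin T → Fin d, ∑ e : Fin d, ∑ v : Fin T → Fin d, ∑ f : Fin d, ∑ x : Fin d, ∑ y : Fin d,
            (M e f * conj' (k (Function.update u a e) (Function.update v b f)))
            * (conj' (M x y) * k (Function.update u a x) (Function.update v b y)) :=
          Finset.sum_congr rfl fun u _ => Finset.sum_congr rfl fun e _ => Finset.sum_comm
      _ = ∑ u : Fin T → Fin d, ∑ v : Fin T → Fin d, ∑ e : Fin d, ∑ f : Fin d, ∑ x : Fin d, ∑ y : Fin d,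
            (M e f * conj' (k (Function.update u a e) (Function.update v b f)))
            * (conj' (M x y) * k (Function.update u a x) (Function.update v b y)) :=
          Finset.sum_congr rfl fun u _ => Finset.sum_comm
      _ = ∑ u : Fin T → Fin d, ∑ v : Fin T → Fin d,
            conj' (∑ x : Fin d, ∑ y : Fin d,
                conj' (M x y) * k (Function.update u a x) (Function.update v b y))
              * (∑ x : Fin d, ∑ y : Fin d,
                conj' (M x y) * k (Function.update u a x) (Function.update v b y)) := by
          refine Finset.sum_congr rfl fun u _ => Finset.sum_congr rfl fun v _ => ?_
          have expand : ∑ e : Fin d, ∑ f : Fin d, ∑ x : Fin d, ∑ y : Fin d,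
              (M e f * conj' (k (Function.update u a e) (Function.update v b f)))
              * (conj' (M x y) * k (Function.update u a x) (Function.update v b y))
              = (∑ e : Fin d, ∑ f : Fin d,
                  M e f * conj' (k (Function.update u a e) (Function.update v b f)))
                * (∑ x : Fin d, ∑ y : Fin d,
                  conj' (M x y) * k (Function.update u a x) (Function.update v b y)) := by
            simp only [← Finset.mul_sum, ← Finset.sum_mul]
          rw [expand]
          congr 1
          rw [map_sum]
          refine Finset.sum_congr rfl fun x _ => ?_
          rw [map_sum]
          refine Finset.sum_congr rfl fun y _ => ?_
          simp only [map_mul, Complex.conj_conj]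
  have key : (d:ℂ) * ((d:ℂ) * R4 T d M k k) = ∑ a : Fin T, ∑ b : Fin T,
      ∑ u : Fin T → Fin d, ∑ v : Fin T → Fin d,
        conj' (∑ x : Fin d, ∑ y : Fin d,
            conj' (M x y) * k (Function.update u a x) (Function.update v b y))
          * (∑ x : Fin d, ∑ y : Fin d,
            conj' (M x y) * k (Function.update u a x) (Function.update v b y)) := by
    rw [hre]
    rw [Finset.mul_sum, Finset.mul_sum]
    refine Finset.sum_congr rfl fun a _ => ?_
    rw [Finset.mul_sum, Finset.mul_sum]
    refine Finset.sum_congr rfl fun b _ => ?_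
    exact inner a b
  refine nonneg_of_cast_mul (d := d) ?_ ?_
  · refine nonneg_of_cast_mul (d := d) ?_ ?_
    · rw [key]
      refine Finset.sum_nonneg fun a _ => Finset.sum_nonneg fun b _ =>
        Finset.sum_nonneg fun u _ => Finset.sum_nonneg fun v _ => ?_
      exact star_mul_self_nonneg _
    · intro hd
      subst hd
      have : R4 T 0 M k k = 0 := by unfold R4; simp
      rw [this, mul_zero]
  · intro hd
    subst hd
    unfold R4
    simp

lemma update_comp_perm {T d : ℕ} (v : Fin T → Fin d) (σ : Equiv.Perm (Fin T))
    (b : Fin T) (y : Fin d) :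
    Function.update v (σ b) y ∘ ⇑σ = Function.update (v ∘ ⇑σ) b y := by
  rw [Function.update_comp_equiv]
  simp


abbrev I7 (T d : ℕ) := (Fin T) × (Fin d) × (Fin T → Fin d) × (Fin d) × (Fin T → Fin d)
    × Equiv.Perm (Fin T) × Equiv.Perm (Fin T)

lemma transfer2 (T d : ℕ) (M : Matrix (Fin d) (Fin d) ℂ)
    (g h : (Fin T → Fin d) → (Fin T → Fin d) → ℂ) :
    R2 T d M g (S T d h) = R2 T d M (S T d g) h := by
  classical
  have l1 : R2 T d M g (S T d h) = ∑ p : I7 T d,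
      M p.2.1 (p.2.2.2.2.1 p.1) * g p.2.2.1 (Function.update p.2.2.2.2.1 p.1 p.2.2.2.1)
        * (conj' (M p.2.1 p.2.2.2.1)
          * conj' (h (p.2.2.1 ∘ ⇑p.2.2.2.2.2.1) (p.2.2.2.2.1 ∘ ⇑p.2.2.2.2.2.2))) := by
    unfold R2 S
    simp only [map_sum, Finset.mul_sum, Fintype.sum_prod_type]
  have l2 : R2 T d M (S T d g) h = ∑ p : I7 T d,
      M p.2.1 (p.2.2.2.2.1 p.1)
        * g (p.2.2.1 ∘ ⇑p.2.2.2.2.2.1)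
            ((Function.update p.2.2.2.2.1 p.1 p.2.2.2.1) ∘ ⇑p.2.2.2.2.2.2)
        * (conj' (M p.2.1 p.2.2.2.1) * conj' (h p.2.2.1 p.2.2.2.2.1)) := by
    unfold R2 S
    simp only [map_sum, Finset.mul_sum, Fintype.sum_prod_type, Finset.sum_mul, Finset.mul_sum]
  rw [l1, l2]
  have hcomp : ∀ (u : Fin T → Fin d) (π : Equiv.Perm (Fin T)), (u ∘ ⇑π) ∘ ⇑π⁻¹ = u := by
    intro u π; ext t; simp
  have hupd : ∀ (v : Fin T → Fin d) (σ : Equiv.Perm (Fin T)) (b : Fin T) (y : Fin d),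
      Function.update (v ∘ ⇑σ) (σ⁻¹ b) y = Function.update v b y ∘ ⇑σ := by
    intro v σ b y
    have := update_comp_perm v σ (σ⁻¹ b) y
    rw [show σ (σ⁻¹ b) = b from σ.apply_symm_apply b] at this
    exact this.symm
  refine (Fintype.sum_bijective
    (fun p : I7 T d => (p.2.2.2.2.2.2⁻¹ p.1, p.2.1, p.2.2.1 ∘ ⇑p.2.2.2.2.2.1, p.2.2.2.1,
      p.2.2.2.2.1 ∘ ⇑p.2.2.2.2.2.2, p.2.2.2.2.2.1⁻¹, p.2.2.2.2.2.2⁻¹))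
    ?_ _ _ ?_).symm
  · have hinv : Function.Involutive
        (fun p : I7 T d => (p.2.2.2.2.2.2⁻¹ p.1, p.2.1, p.2.2.1 ∘ ⇑p.2.2.2.2.2.1, p.2.2.2.1,
          p.2.2.2.2.1 ∘ ⇑p.2.2.2.2.2.2, p.2.2.2.2.2.1⁻¹, p.2.2.2.2.2.2⁻¹)) := by
      intro p
      obtain ⟨b, x, u, y, v, π, σ⟩ := p
      simp only [inv_inv]
      refine Prod.ext (by simp) (Prod.ext rfl (Prod.ext (hcomp u π) (Prod.ext rfl
        (Prod.ext (hcomp v σ) (Prod.ext rfl rfl)))))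
    exact hinv.bijective
  · intro p
    obtain ⟨b, x, u, y, v, π, σ⟩ := p
    show M x (v b) * g (u ∘ ⇑π) ((Function.update v b y) ∘ ⇑σ)
        * (conj' (M x y) * conj' (h u v))
      = M x ((v ∘ ⇑σ) (σ⁻¹ b)) * g (u ∘ ⇑π) (Function.update (v ∘ ⇑σ) (σ⁻¹ b) y)
        * (conj' (M x y) * conj' (h ((u ∘ ⇑π) ∘ ⇑π⁻¹) ((v ∘ ⇑σ) ∘ ⇑σ⁻¹)))
    rw [hupd, hcomp u π, hcomp v σ]
    simp


lemma hcomp' {T d : ℕ} : ∀ (u : Fin T → Fin d) (π : Equiv.Perm (Fin T)),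
    (u ∘ ⇑π) ∘ ⇑π⁻¹ = u := by
  intro u π; ext t; simp

lemma hupd' {T d : ℕ} : ∀ (v : Fin T → Fin d) (σ : Equiv.Perm (Fin T)) (b : Fin T) (y : Fin d),
    Function.update (v ∘ ⇑σ) (σ⁻¹ b) y = Function.update v b y ∘ ⇑σ := by
  intro v σ b y
  have := update_comp_perm v σ (σ⁻¹ b) y
  rw [show σ (σ⁻¹ b) = b from σ.apply_symm_apply b] at this
  exact this.symm

lemma transfer3 (T d : ℕ) (M : Matrix (Fin d) (Fin d) ℂ)
    (g h : (Fin T → Fin d) → (Fin T → Fin d) → ℂ) :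
    R3 T d M g (S T d h) = R3 T d M (S T d g) h := by
  classical
  have l1 : R3 T d M g (S T d h) = ∑ p : I7 T d,
      M (p.2.2.1 p.1) p.2.2.2.1 * g (Function.update p.2.2.1 p.1 p.2.1) p.2.2.2.2.1
        * (conj' (M p.2.1 p.2.2.2.1)
          * conj' (h (p.2.2.1 ∘ ⇑p.2.2.2.2.2.1) (p.2.2.2.2.1 ∘ ⇑p.2.2.2.2.2.2))) := by
    unfold R3 S
    simp only [map_sum, Finset.mul_sum, Fintype.sum_prod_type]
  have l2 : R3 T d M (S T d g) h = ∑ p : I7 T d,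
      M (p.2.2.1 p.1) p.2.2.2.1
        * g ((Function.update p.2.2.1 p.1 p.2.1) ∘ ⇑p.2.2.2.2.2.1)
            (p.2.2.2.2.1 ∘ ⇑p.2.2.2.2.2.2)
        * (conj' (M p.2.1 p.2.2.2.1) * conj' (h p.2.2.1 p.2.2.2.2.1)) := by
    unfold R3 S
    simp only [map_sum, Finset.mul_sum, Fintype.sum_prod_type, Finset.sum_mul, Finset.mul_sum]
  rw [l1, l2]
  refine (Fintype.sum_bijective
    (fun p : I7 T d => (p.2.2.2.2.2.1⁻¹ p.1, p.2.1, p.2.2.1 ∘ ⇑p.2.2.2.2.2.1, p.2.2.2.1,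
      p.2.2.2.2.1 ∘ ⇑p.2.2.2.2.2.2, p.2.2.2.2.2.1⁻¹, p.2.2.2.2.2.2⁻¹))
    ?_ _ _ ?_).symm
  · have hinv : Function.Involutive
        (fun p : I7 T d => (p.2.2.2.2.2.1⁻¹ p.1, p.2.1, p.2.2.1 ∘ ⇑p.2.2.2.2.2.1, p.2.2.2.1,
          p.2.2.2.2.1 ∘ ⇑p.2.2.2.2.2.2, p.2.2.2.2.2.1⁻¹, p.2.2.2.2.2.2⁻¹)) := by
      intro p
      obtain ⟨a, x, u, y, v, π, σ⟩ := p
      simp only [inv_inv]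
      refine Prod.ext (by simp) (Prod.ext rfl (Prod.ext (hcomp' u π) (Prod.ext rfl
        (Prod.ext (hcomp' v σ) (Prod.ext rfl rfl)))))
    exact hinv.bijective
  · intro p
    obtain ⟨a, x, u, y, v, π, σ⟩ := p
    show M (u a) y * g ((Function.update u a x) ∘ ⇑π) (v ∘ ⇑σ)
        * (conj' (M x y) * conj' (h u v))
      = M ((u ∘ ⇑π) (π⁻¹ a)) y * g (Function.update (u ∘ ⇑π) (π⁻¹ a) x) (v ∘ ⇑σ)
        * (conj' (M x y) * conj' (h ((u ∘ ⇑π) ∘ ⇑π⁻¹) ((v ∘ ⇑σ) ∘ ⇑σ⁻¹)))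
    rw [hupd', hcomp' u π, hcomp' v σ]
    simp

abbrev I8 (T d : ℕ) := (Fin T) × (Fin T) × (Fin d) × (Fin T → Fin d) × (Fin d)
    × (Fin T → Fin d) × Equiv.Perm (Fin T) × Equiv.Perm (Fin T)

lemma transfer4 (T d : ℕ) (M : Matrix (Fin d) (Fin d) ℂ)
    (g h : (Fin T → Fin d) → (Fin T → Fin d) → ℂ) :
    R4 T d M g (S T d h) = R4 T d M (S T d g) h := by
  classical
  have l1 : R4 T d M g (S T d h) = ∑ p : I8 T d,
      M (p.2.2.2.1 p.1) (p.2.2.2.2.2.1 p.2.1)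
        * g (Function.update p.2.2.2.1 p.1 p.2.2.1)
            (Function.update p.2.2.2.2.2.1 p.2.1 p.2.2.2.2.1)
        * (conj' (M p.2.2.1 p.2.2.2.2.1)
          * conj' (h (p.2.2.2.1 ∘ ⇑p.2.2.2.2.2.2.1) (p.2.2.2.2.2.1 ∘ ⇑p.2.2.2.2.2.2.2))) := by
    unfold R4 S
    simp only [map_sum, Finset.mul_sum, Fintype.sum_prod_type]
  have l2 : R4 T d M (S T d g) h = ∑ p : I8 T d,
      M (p.2.2.2.1 p.1) (p.2.2.2.2.2.1 p.2.1)
        * g ((Function.update p.2.2.2.1 p.1 p.2.2.1) ∘ ⇑p.2.2.2.2.2.2.1)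
            ((Function.update p.2.2.2.2.2.1 p.2.1 p.2.2.2.2.1) ∘ ⇑p.2.2.2.2.2.2.2)
        * (conj' (M p.2.2.1 p.2.2.2.2.1) * conj' (h p.2.2.2.1 p.2.2.2.2.2.1)) := by
    unfold R4 S
    simp only [map_sum, Finset.mul_sum, Fintype.sum_prod_type, Finset.sum_mul, Finset.mul_sum]
  rw [l1, l2]
  refine (Fintype.sum_bijective
    (fun p : I8 T d => (p.2.2.2.2.2.2.1⁻¹ p.1, p.2.2.2.2.2.2.2⁻¹ p.2.1, p.2.2.1,
      p.2.2.2.1 ∘ ⇑p.2.2.2.2.2.2.1, p.2.2.2.2.1, p.2.2.2.2.2.1 ∘ ⇑p.2.2.2.2.2.2.2,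
      p.2.2.2.2.2.2.1⁻¹, p.2.2.2.2.2.2.2⁻¹))
    ?_ _ _ ?_).symm
  · have hinv : Function.Involutive
        (fun p : I8 T d => (p.2.2.2.2.2.2.1⁻¹ p.1, p.2.2.2.2.2.2.2⁻¹ p.2.1, p.2.2.1,
          p.2.2.2.1 ∘ ⇑p.2.2.2.2.2.2.1, p.2.2.2.2.1, p.2.2.2.2.2.1 ∘ ⇑p.2.2.2.2.2.2.2,
          p.2.2.2.2.2.2.1⁻¹, p.2.2.2.2.2.2.2⁻¹)) := by
      intro p
      obtain ⟨a, b, x, u, y, v, π, σ⟩ := p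
      simp only [inv_inv]
      refine Prod.ext (by simp) (Prod.ext (by simp) (Prod.ext rfl
        (Prod.ext (hcomp' u π) (Prod.ext rfl (Prod.ext (hcomp' v σ)
          (Prod.ext rfl rfl))))))
    exact hinv.bijective
  · intro p
    obtain ⟨a, b, x, u, y, v, π, σ⟩ := p
    show M (u a) (v b)
        * g ((Function.update u a x) ∘ ⇑π) ((Function.update v b y) ∘ ⇑σ)
        * (conj' (M x y) * conj' (h u v))
      = M ((u ∘ ⇑π) (π⁻¹ a)) ((v ∘ ⇑σ) (σ⁻¹ b))
        * g (Function.update (u ∘ ⇑π) (π⁻¹ a) x) (Function.update (v ∘ ⇑σ) (σ⁻¹ b) y)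
        * (conj' (M x y) * conj' (h ((u ∘ ⇑π) ∘ ⇑π⁻¹) ((v ∘ ⇑σ) ∘ ⇑σ⁻¹)))
    rw [hupd', hupd', hcomp' u π, hcomp' v σ]
    simp

lemma nonneg_of_real_mul {r : ℝ} {z : ℂ} (hr : 0 < r) (h : 0 ≤ (r:ℂ) * z) : 0 ≤ z := by
  have hz : z = ((r⁻¹ : ℝ):ℂ) * ((r:ℂ) * z) := by
    push_cast
    field_simp
  rw [hz]
  exact mul_nonneg (cast_nonneg' _ (by positivity)) h

lemma scaleS {T d : ℕ} (g : (Fin T → Fin d) → (Fin T → Fin d) → ℂ) (u v : Fin T → Fin d) :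
    conj' (S T d (S T d g) u v) = ((T.factorial:ℂ))^2 * conj' (S T d g u v) := by
  rw [S_S g u v, map_mul, map_pow, map_natCast]

lemma nonneg2 (T d : ℕ) (M : Matrix (Fin d) (Fin d) ℂ) (g) :
    0 ≤ R2 T d M g (S T d g) := by
  have hsc : R2 T d M g (S T d (S T d g)) = ((T.factorial:ℂ))^2 * R2 T d M g (S T d g) := by
    unfold R2
    rw [Finset.mul_sum]
    refine Finset.sum_congr rfl fun b _ => ?_
    rw [Finset.mul_sum]
    refine Finset.sum_congr rfl fun x _ => ?_
    rw [Finset.mul_sum]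
    refine Finset.sum_congr rfl fun u _ => ?_
    rw [Finset.mul_sum]
    refine Finset.sum_congr rfl fun y _ => ?_
    rw [Finset.mul_sum]
    refine Finset.sum_congr rfl fun v _ => ?_
    rw [scaleS g u v]
    ring
  have h0 := pos2 T d M (S T d g)
  rw [← transfer2, hsc] at h0
  refine nonneg_of_real_mul (r := ((T.factorial:ℝ))^2) ?_ ?_
  · have : (0:ℝ) < (T.factorial:ℝ) := by exact_mod_cast T.factorial_pos
    positivity
  · convert h0 using 2
    push_cast
    ring

lemma nonneg3 (T d : ℕ) (M : Matrix (Fin d) (Fin d) ℂ) (g) :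
    0 ≤ R3 T d M g (S T d g) := by
  have hsc : R3 T d M g (S T d (S T d g)) = ((T.factorial:ℂ))^2 * R3 T d M g (S T d g) := by
    unfold R3
    rw [Finset.mul_sum]
    refine Finset.sum_congr rfl fun a _ => ?_
    rw [Finset.mul_sum]
    refine Finset.sum_congr rfl fun x _ => ?_
    rw [Finset.mul_sum]
    refine Finset.sum_congr rfl fun u _ => ?_
    rw [Finset.mul_sum]
    refine Finset.sum_congr rfl fun y _ => ?_
    rw [Finset.mul_sum]
    refine Finset.sum_congr rfl fun v _ => ?_
    rw [scaleS g u v]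
    ring
  have h0 := pos3 T d M (S T d g)
  rw [← transfer3, hsc] at h0
  refine nonneg_of_real_mul (r := ((T.factorial:ℝ))^2) ?_ ?_
  · have : (0:ℝ) < (T.factorial:ℝ) := by exact_mod_cast T.factorial_pos
    positivity
  · convert h0 using 2
    push_cast
    ring

lemma nonneg4 (T d : ℕ) (M : Matrix (Fin d) (Fin d) ℂ) (g) :
    0 ≤ R4 T d M g (S T d g) := by
  have hsc : R4 T d M g (S T d (S T d g)) = ((T.factorial:ℂ))^2 * R4 T d M g (S T d g) := by
    unfold R4
    rw [Finset.mul_sum]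
    refine Finset.sum_congr rfl fun a _ => ?_
    rw [Finset.mul_sum]
    refine Finset.sum_congr rfl fun b _ => ?_
    rw [Finset.mul_sum]
    refine Finset.sum_congr rfl fun x _ => ?_
    rw [Finset.mul_sum]
    refine Finset.sum_congr rfl fun u _ => ?_
    rw [Finset.mul_sum]
    refine Finset.sum_congr rfl fun y _ => ?_
    rw [Finset.mul_sum]
    refine Finset.sum_congr rfl fun v _ => ?_
    rw [scaleS g u v]
    ring
  have h0 := pos4 T d M (S T d g)
  rw [← transfer4, hsc] at h0
  refine nonneg_of_real_mul (r := ((T.factorial:ℝ))^2) ?_ ?_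
  · have : (0:ℝ) < (T.factorial:ℝ) := by exact_mod_cast T.factorial_pos
    positivity
  · convert h0 using 2
    push_cast
    ring

lemma one_le_Qf : ∀ (T d : ℕ) (M : Fin T → Matrix (Fin d) (Fin d) ℂ),
    (∀ t, ∑ x, ∑ y, M t x y * conj' (M t x y) = 1) →
    1 ≤ Qf T d (fun i j => ∏ t, M t (i t) (j t)) := by
  intro T
  induction T with
  | zero =>
    intro d M hM
    have : Qf 0 d (fun i j => ∏ t, M t (i t) (j t)) = 1 := by
      unfold Qf S
      simp
    rw [this]
  | succ T ih =>
    intro d M hM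
    set g : (Fin T → Fin d) → (Fin T → Fin d) → ℂ :=
      fun u v => ∏ t : Fin T, M t.succ (u t) (v t) with hg
    have hrec : (fun i j => ∏ t : Fin (T+1), M t (i t) (j t))
        = fun i j => (M 0) (i 0) (j 0) * g (i ∘ Fin.succ) (j ∘ Fin.succ) := by
      funext i j
      rw [Fin.prod_univ_succ, hg]
      rfl
    rw [hrec, decomp, hM 0, one_mul]
    have h1 : 1 ≤ Qf T d g :=
      ih d (fun t => M t.succ) (fun t => hM t.succ)
    exact le_add_of_le_of_nonneg (le_add_of_le_of_nonneg
      (le_add_of_le_of_nonneg h1 (nonneg2 _ _ _ _)) (nonneg3 _ _ _ _)) (nonneg4 _ _ _ _)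

lemma doubleQ_eq_Qf (d T : ℕ) (M : Fin T → Matrix (Fin d) (Fin d) ℂ) :
    doubleQ d T M = Qf T d (fun i j => ∏ t, M t (i t) (j t)) := by
  unfold doubleQ Qf S
  rw [sum_swap4 (fun (π : Equiv.Perm (Fin T)) (σ : Equiv.Perm (Fin T))
    (i : Fin T → Fin d) (j : Fin T → Fin d) =>
      ∏ t, M t (i t) (j t) * conj' (M t (i (π t)) (j (σ t))))]
  refine Finset.sum_congr rfl fun i _ => Finset.sum_congr rfl fun j _ => ?_
  rw [map_sum, Finset.mul_sum]
  refine Finset.sum_congr rfl fun π _ => ?_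
  rw [map_sum, Finset.mul_sum]
  refine Finset.sum_congr rfl fun σ _ => ?_
  rw [Finset.prod_mul_distrib, map_prod]
  rfl

end DQaux


/-- For any unit vectors `ψ_1, …, ψ_T` of the bipartite space `ℂ^d ⊗ ℂ^d`, encoded by
matrices `M_t` of unit Frobenius norm, the quantity
`Q = ∑_{π,σ ∈ S_T} ∑_{i,j : [T]→[d]} ∏_t M_t(i(t),j(t)) · conj(M_t(i(π(t)),j(σ(t))))`
is real and `Q ≥ 1` (stated via the partial order on `ℂ`). -/
theorem doubleQ_ge_one (d T : ℕ) (M : Fin T → Matrix (Fin d) (Fin d) ℂ)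
    (hM : ∀ t, ∑ i, ∑ j, ‖M t i j‖ ^ 2 = 1) :
    (1 : ℂ) ≤ doubleQ d T M := by
  rw [DQaux.doubleQ_eq_Qf]
  refine DQaux.one_le_Qf T d M (fun t => ?_)
  have : ∑ x, ∑ y, M t x y * (starRingEnd ℂ) (M t x y)
      = ((∑ x, ∑ y, ‖M t x y‖ ^ 2 : ℝ) : ℂ) := by
    push_cast
    refine Finset.sum_congr rfl fun x _ => Finset.sum_congr rfl fun y _ => ?_
    rw [Complex.mul_conj]
    norm_cast
    rw [Complex.normSq_eq_norm_sq]
  rw [this, hM t]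
  norm_num
end

section
/- Let u_1, …, u_T and w_1, …, w_T be unit vectors in ℂ^d, and set M_t(i,j) = u_t(i) · w_t(j) (so each ψ_t = u_t ⊗ w_t is a bipartite product unit vector). Then the double-permutation sum Q := ∑_{π, σ ∈ S_T} ∑_{i : [T]→[d]} ∑_{j : [T]→[d]} ∏_{t=1}^T M_t(i(t), j(t)) · conj( M_t(i(π(t)), j(σ(t))) ) factorizes as Q = per(G_u) · per(G_w), where G_u and G_w are the Gram matrices of (u_t) and (w_t) respectively; consequently Q ≥ 1, with equality Q = 1 attained when {u_t} and {w_t} are each orthonormal families (possible whenever T ≤ d). -/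
open scoped ComplexOrder

/-- The permanent of a square complex matrix. -/
noncomputable def permanent {N : Type*} [Fintype N] [DecidableEq N]
    (A : Matrix N N ℂ) : ℂ :=
  ∑ σ : Equiv.Perm N, ∏ i, A i (σ i)

namespace DQAux


variable {d n : ℕ}

noncomputable def gram (v : Fin n → Fin d → ℂ) (s t : Fin n) : ℂ :=
  ∑ x, (starRingEnd ℂ) (v s x) * v t x

lemma gram_conj (v : Fin n → Fin d → ℂ) (s t : Fin n) :
    (starRingEnd ℂ) (gram v s t) = gram v t s := by
  simp only [gram, map_sum, map_mul, RingHom.id_apply, Complex.conj_conj]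
  exact Finset.sum_congr rfl fun x _ => mul_comm _ _

lemma gram_self_nonneg (v : Fin n → Fin d → ℂ) (t : Fin n) : 0 ≤ gram v t t :=
  Finset.sum_nonneg fun x _ => star_mul_self_nonneg (v t x)

noncomputable def pg (v : Fin n → Fin d → ℂ) : ℂ :=
  ∑ σ : Equiv.Perm (Fin n), ∏ t, gram v t (σ t)

def insAt (r s : Fin (n + 1)) (τ : Equiv.Perm (Fin n)) : Equiv.Perm (Fin (n + 1)) :=
  ((finSuccEquiv' r).trans (Equiv.optionCongr τ)).trans (finSuccEquiv' s).symm

@[simp] lemma insAt_self (r s : Fin (n + 1)) (τ : Equiv.Perm (Fin n)) :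
    insAt r s τ r = s := by
  simp [insAt, finSuccEquiv'_at, finSuccEquiv'_symm_none]

@[simp] lemma insAt_succAbove (r s : Fin (n + 1)) (τ : Equiv.Perm (Fin n)) (t : Fin n) :
    insAt r s τ (r.succAbove t) = s.succAbove (τ t) := by
  simp [insAt, finSuccEquiv'_succAbove, finSuccEquiv'_symm_some]

lemma insAt_bijective (s : Fin (n + 1)) :
    Function.Bijective (fun p : Fin (n + 1) × Equiv.Perm (Fin n) => insAt p.1 s p.2) := by
  rw [Fintype.bijective_iff_injective_and_card]
  constructor
  · rintro ⟨r, τ⟩ ⟨r', τ'⟩ h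
    simp only at h
    have hr : r = r' := by
      by_contra hne
      obtain ⟨t, ht⟩ := Fin.exists_succAbove_eq (Ne.symm hne)
      have h1 : insAt r s τ r' = insAt r' s τ' r' := by rw [h]
      rw [insAt_self, ← ht, insAt_succAbove] at h1
      exact Fin.succAbove_ne s (τ t) h1
    subst hr
    have hτ : τ = τ' := by
      apply Equiv.ext; intro t
      have h2 : insAt r s τ (r.succAbove t) = insAt r s τ' (r.succAbove t) := by rw [h]
      rw [insAt_succAbove, insAt_succAbove] at h2
      exact Fin.succAbove_right_injective h2
    rw [hτ]
  · simp [Fintype.card_perm, Nat.factorial_succ]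

lemma pg_decompose (v : Fin (n + 2) → Fin d → ℂ) :
    pg v = gram v 0 0 * pg (fun t => v t.succ) +
      ∑ s : Fin (n + 1), ∑ r : Fin (n + 1), ∑ τ : Equiv.Perm (Fin n),
        gram v 0 s.succ * (gram v r.succ 0 *
          ∏ t, gram v (r.succAbove t).succ ((s.succAbove (τ t)).succ)) := by
  have h0 : pg v = ∑ p : Fin (n + 2), ∑ σ₁ : Equiv.Perm (Fin (n + 1)),
      ∏ t, gram v t (Equiv.Perm.decomposeFin.symm (p, σ₁) t) := by
    rw [pg, ← Equiv.sum_comp (Equiv.Perm.decomposeFin.symm)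
      (fun σ => ∏ t, gram v t (σ t)), Fintype.sum_prod_type]
  rw [h0, Fin.sum_univ_succ]
  congr 1
  · -- p = 0 term
    rw [pg, Finset.mul_sum]
    refine Finset.sum_congr rfl fun σ₁ _ => ?_
    rw [Fin.prod_univ_succ, Equiv.Perm.decomposeFin_symm_apply_zero]
    congr 1
  · -- p = s.succ terms
    refine Finset.sum_congr rfl fun s _ => ?_
    rw [← Fintype.sum_bijective _ (insAt_bijective s)
      (fun p : Fin (n + 1) × Equiv.Perm (Fin n) =>
        ∏ t, gram v t (Equiv.Perm.decomposeFin.symm (s.succ, insAt p.1 s p.2) t))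
      (fun σ₁ => ∏ t, gram v t (Equiv.Perm.decomposeFin.symm (s.succ, σ₁) t))
      (fun p => rfl), Fintype.sum_prod_type]
    refine Finset.sum_congr rfl fun r _ => Finset.sum_congr rfl fun τ _ => ?_
    rw [Fin.prod_univ_succ, Fin.prod_univ_succAbove
      (fun i => gram v i.succ ((Equiv.Perm.decomposeFin.symm (s.succ, insAt r s τ)) i.succ)) r,
      Equiv.Perm.decomposeFin_symm_apply_zero]
    congr 1
    congr 1
    · rw [Equiv.Perm.decomposeFin_symm_apply_succ, insAt_self, Equiv.swap_apply_right]
    · refine Finset.prod_congr rfl fun t _ => ?_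
      rw [Equiv.Perm.decomposeFin_symm_apply_succ, insAt_succAbove,
        Equiv.swap_apply_of_ne_of_ne (Fin.succ_ne_zero _)
          (fun hc => Fin.succAbove_ne s (τ t) (Fin.succ_injective _ hc))]

lemma sum_fun_prod {m : ℕ} (f : Fin m → Fin d → ℂ) :
    ∑ i : Fin m → Fin d, ∏ t, f t (i t) = ∏ t, ∑ x, f t x :=
  (Fintype.prod_sum f).symm

noncomputable def phi (v : Fin (n + 2) → Fin d → ℂ) (r : Fin (n + 1))
    (i : Fin n → Fin d) : ℂ :=
  ∑ π : Equiv.Perm (Fin n), ∏ t, v ((r.succAbove (π t)).succ) (i t)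

lemma claimA (v : Fin (n + 2) → Fin d → ℂ) (r s : Fin (n + 1)) :
    ∑ i : Fin n → Fin d, (starRingEnd ℂ) (phi v r i) * phi v s i
      = ((Nat.factorial n) : ℂ) * ∑ τ : Equiv.Perm (Fin n),
          ∏ t, gram v (r.succAbove t).succ ((s.succAbove (τ t)).succ) := by
  calc ∑ i : Fin n → Fin d, (starRingEnd ℂ) (phi v r i) * phi v s i
      = ∑ i : Fin n → Fin d, ∑ π : Equiv.Perm (Fin n), ∑ ρ : Equiv.Perm (Fin n),
          ∏ t, ((starRingEnd ℂ) (v ((r.succAbove (π t)).succ) (i t)) *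
            v ((s.succAbove (ρ t)).succ) (i t)) := by
        refine Finset.sum_congr rfl fun i _ => ?_
        rw [phi, phi, map_sum, Finset.sum_mul_sum]
        refine Finset.sum_congr rfl fun π _ => Finset.sum_congr rfl fun ρ _ => ?_
        rw [map_prod, ← Finset.prod_mul_distrib]
    _ = ∑ π : Equiv.Perm (Fin n), ∑ ρ : Equiv.Perm (Fin n),
          ∏ t, gram v ((r.succAbove (π t)).succ) ((s.succAbove (ρ t)).succ) := by
        rw [Finset.sum_comm]
        refine Finset.sum_congr rfl fun π _ => ?_
        rw [Finset.sum_comm]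
        refine Finset.sum_congr rfl fun ρ _ => ?_
        rw [sum_fun_prod (fun t x => (starRingEnd ℂ) (v ((r.succAbove (π t)).succ) x) *
          v ((s.succAbove (ρ t)).succ) x)]
        rfl
    _ = ∑ _π : Equiv.Perm (Fin n), ∑ τ : Equiv.Perm (Fin n),
          ∏ t, gram v ((r.succAbove t).succ) ((s.succAbove (τ t)).succ) := by
        refine Finset.sum_congr rfl fun π _ => ?_
        rw [← Equiv.sum_comp (Equiv.mulRight π⁻¹)
          (fun τ => ∏ t, gram v ((r.succAbove t).succ) ((s.succAbove (τ t)).succ))]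
        refine Finset.sum_congr rfl fun ρ _ => ?_
        rw [← Equiv.prod_comp π (fun t => gram v ((r.succAbove t).succ)
          ((s.succAbove ((Equiv.mulRight π⁻¹ ρ) t)).succ))]
        refine Finset.prod_congr rfl fun t _ => ?_
        simp [Equiv.Perm.mul_apply]
    _ = ((Nat.factorial n) : ℂ) * ∑ τ : Equiv.Perm (Fin n),
          ∏ t, gram v (r.succAbove t).succ ((s.succAbove (τ t)).succ) := by
        rw [Finset.sum_const, Finset.card_univ, Fintype.card_perm, nsmul_eq_mul,
          Fintype.card_fin]

lemma X_nonneg (v : Fin (n + 2) → Fin d → ℂ) :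
    0 ≤ ∑ s : Fin (n + 1), ∑ r : Fin (n + 1), ∑ τ : Equiv.Perm (Fin n),
      gram v 0 s.succ * (gram v r.succ 0 *
        ∏ t, gram v (r.succAbove t).succ ((s.succAbove (τ t)).succ)) := by
  set Xi : (Fin n → Fin d) → ℂ := fun i =>
    ∑ r : Fin (n + 1), (starRingEnd ℂ) (gram v r.succ 0) * phi v r i with hXi
  have hS : 0 ≤ ∑ i : Fin n → Fin d, (starRingEnd ℂ) (Xi i) * Xi i :=
    Finset.sum_nonneg fun i _ => by
      rw [starRingEnd_apply]; exact star_mul_self_nonneg _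
  have hEq : ∑ i : Fin n → Fin d, (starRingEnd ℂ) (Xi i) * Xi i
      = ((Nat.factorial n) : ℂ) * ∑ s : Fin (n + 1), ∑ r : Fin (n + 1),
          ∑ τ : Equiv.Perm (Fin n), gram v 0 s.succ * (gram v r.succ 0 *
            ∏ t, gram v (r.succAbove t).succ ((s.succAbove (τ t)).succ)) := by
    calc ∑ i : Fin n → Fin d, (starRingEnd ℂ) (Xi i) * Xi i
        = ∑ i : Fin n → Fin d, ∑ r : Fin (n + 1), ∑ s : Fin (n + 1),
            (gram v r.succ 0 * (starRingEnd ℂ) (phi v r i)) *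
              ((starRingEnd ℂ) (gram v s.succ 0) * phi v s i) := by
          refine Finset.sum_congr rfl fun i _ => ?_
          rw [hXi]
          simp only [map_sum, map_mul, Complex.conj_conj]
          rw [Finset.sum_mul_sum]
      _ = ∑ r : Fin (n + 1), ∑ s : Fin (n + 1),
            (gram v r.succ 0 * (starRingEnd ℂ) (gram v s.succ 0)) *
              ∑ i : Fin n → Fin d, (starRingEnd ℂ) (phi v r i) * phi v s i := by
          rw [Finset.sum_comm]
          refine Finset.sum_congr rfl fun r _ => ?_
          rw [Finset.sum_comm]
          refine Finset.sum_congr rfl fun s _ => ?_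
          rw [Finset.mul_sum]
          refine Finset.sum_congr rfl fun i _ => by ring
      _ = ∑ r : Fin (n + 1), ∑ s : Fin (n + 1),
            (gram v r.succ 0 * gram v 0 s.succ) * (((Nat.factorial n) : ℂ) *
              ∑ τ : Equiv.Perm (Fin n),
                ∏ t, gram v (r.succAbove t).succ ((s.succAbove (τ t)).succ)) := by
          refine Finset.sum_congr rfl fun r _ => Finset.sum_congr rfl fun s _ => ?_
          rw [claimA, gram_conj]
      _ = ((Nat.factorial n) : ℂ) * ∑ s : Fin (n + 1), ∑ r : Fin (n + 1),
            ∑ τ : Equiv.Perm (Fin n), gram v 0 s.succ * (gram v r.succ 0 *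
              ∏ t, gram v (r.succAbove t).succ ((s.succAbove (τ t)).succ)) := by
          rw [Finset.mul_sum, Finset.sum_comm]
          refine Finset.sum_congr rfl fun r _ => ?_
          rw [Finset.mul_sum]
          refine Finset.sum_congr rfl fun s _ => ?_
          rw [Finset.mul_sum, Finset.mul_sum, Finset.mul_sum]
          refine Finset.sum_congr rfl fun τ _ => by ring
  have hfacR : (0 : ℝ) ≤ ((Nat.factorial n : ℝ))⁻¹ := by positivity
  have hfac : (0 : ℂ) ≤ ((Nat.factorial n : ℂ))⁻¹ := by
    rw [show ((Nat.factorial n : ℂ)) = ((Nat.factorial n : ℝ) : ℂ) by norm_cast,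
      ← Complex.ofReal_inv]
    exact Complex.zero_le_real.2 hfacR
  have hne : ((Nat.factorial n) : ℂ) ≠ 0 :=
    Nat.cast_ne_zero.2 (Nat.factorial_ne_zero n)
  have hX : (∑ s : Fin (n + 1), ∑ r : Fin (n + 1), ∑ τ : Equiv.Perm (Fin n),
      gram v 0 s.succ * (gram v r.succ 0 *
        ∏ t, gram v (r.succAbove t).succ ((s.succAbove (τ t)).succ)))
      = ((Nat.factorial n : ℂ))⁻¹ * (∑ i : Fin n → Fin d, (starRingEnd ℂ) (Xi i) * Xi i) := by
    rw [hEq, inv_mul_cancel_left₀ hne]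
  rw [hX]
  exact mul_nonneg hfac hS

lemma marcus : ∀ (n : ℕ) (v : Fin n → Fin d → ℂ), (∏ t, gram v t t) ≤ pg v := by
  intro n
  induction n with
  | zero => intro v; simp [pg]
  | succ m ih =>
    intro v
    cases m with
    | zero =>
      have h1 : pg v = gram v 0 0 := by
        rw [pg]
        rw [Fintype.sum_subsingleton
          (fun σ : Equiv.Perm (Fin 1) => ∏ t, gram v t (σ t)) 1]
        simp
      rw [h1, Fin.prod_univ_one]
    | succ k =>
      rw [pg_decompose v]
      have h2 : (∏ t, gram v t t)
          = gram v 0 0 * ∏ t : Fin (k + 1), gram (fun t => v t.succ) t t := by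
        rw [Fin.prod_univ_succ]; rfl
      rw [h2]
      refine le_trans (mul_le_mul_of_nonneg_left (ih (fun t => v t.succ))
        (gram_self_nonneg v 0)) ?_
      exact le_add_of_nonneg_right (X_nonneg v)

lemma Afact {T : ℕ} (x : Fin T → Fin d → ℂ) (π : Equiv.Perm (Fin T)) :
    ∑ i : Fin T → Fin d, ∏ t, x t (i t) * (starRingEnd ℂ) (x t (i (π t)))
      = ∏ t, gram x (π⁻¹ t) t := by
  calc ∑ i : Fin T → Fin d, ∏ t, x t (i t) * (starRingEnd ℂ) (x t (i (π t)))
      = ∑ i : Fin T → Fin d, ∏ t, x t (i t) * (starRingEnd ℂ) (x (π⁻¹ t) (i t)) := by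
        refine Finset.sum_congr rfl fun i _ => ?_
        rw [Finset.prod_mul_distrib, Finset.prod_mul_distrib]
        congr 1
        rw [← Equiv.prod_comp π⁻¹ (fun t => (starRingEnd ℂ) (x t (i (π t))))]
        refine Finset.prod_congr rfl fun t _ => ?_
        simp
    _ = ∏ t, ∑ y, x t y * (starRingEnd ℂ) (x (π⁻¹ t) y) :=
        sum_fun_prod (fun t y => x t y * (starRingEnd ℂ) (x (π⁻¹ t) y))
    _ = ∏ t, gram x (π⁻¹ t) t := by
        refine Finset.prod_congr rfl fun t _ => ?_
        rw [gram]
        exact Finset.sum_congr rfl fun y _ => mul_comm _ _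

lemma sum_Afact {T : ℕ} (x : Fin T → Fin d → ℂ) :
    ∑ π : Equiv.Perm (Fin T), ∏ t, gram x (π⁻¹ t) t = pg x := by
  rw [pg]
  refine Finset.sum_congr rfl fun π _ => ?_
  rw [← Equiv.prod_comp π (fun t => gram x (π⁻¹ t) t)]
  refine Finset.prod_congr rfl fun t _ => ?_
  simp

lemma factorQ (d T : ℕ) (u w : Fin T → EuclideanSpace ℂ (Fin d)) :
    doubleQ d T (fun t => Matrix.of fun i j => u t i * w t j)
      = pg (fun t x => u t x) * pg (fun t x => w t x) := by
  rw [doubleQ]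
  calc ∑ π : Equiv.Perm (Fin T), ∑ σ : Equiv.Perm (Fin T),
        ∑ i : Fin T → Fin d, ∑ j : Fin T → Fin d,
          ∏ t, (Matrix.of fun i j => u t i * w t j) (i t) (j t) *
            (starRingEnd ℂ) ((Matrix.of fun i j => u t i * w t j) (i (π t)) (j (σ t)))
      = ∑ π : Equiv.Perm (Fin T), ∑ σ : Equiv.Perm (Fin T),
          (∑ i : Fin T → Fin d, ∏ t, u t (i t) * (starRingEnd ℂ) (u t (i (π t)))) *
          (∑ j : Fin T → Fin d, ∏ t, w t (j t) * (starRingEnd ℂ) (w t (j (σ t)))) := by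
        refine Finset.sum_congr rfl fun π _ => Finset.sum_congr rfl fun σ _ => ?_
        rw [Finset.sum_mul_sum]
        refine Finset.sum_congr rfl fun i _ => Finset.sum_congr rfl fun j _ => ?_
        rw [← Finset.prod_mul_distrib]
        refine Finset.prod_congr rfl fun t _ => ?_
        simp only [Matrix.of_apply, map_mul]
        ring
    _ = (∑ π : Equiv.Perm (Fin T),
          ∑ i : Fin T → Fin d, ∏ t, u t (i t) * (starRingEnd ℂ) (u t (i (π t)))) *
        (∑ σ : Equiv.Perm (Fin T),
          ∑ j : Fin T → Fin d, ∏ t, w t (j t) * (starRingEnd ℂ) (w t (j (σ t)))) := by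
        rw [Finset.sum_mul_sum]
    _ = pg (fun t x => u t x) * pg (fun t x => w t x) := by
        congr 1
        · rw [← sum_Afact (fun t x => u t x)]
          exact Finset.sum_congr rfl fun π _ => Afact (fun t x => u t x) π
        · rw [← sum_Afact (fun t x => w t x)]
          exact Finset.sum_congr rfl fun σ _ => Afact (fun t x => w t x) σ

lemma permanent_gram {T : ℕ} (u : Fin T → EuclideanSpace ℂ (Fin d)) :
    permanent (Matrix.of fun s t => (inner ℂ (u s) (u t) : ℂ)) = pg (fun t x => u t x) := by
  rw [permanent, pg]
  refine Finset.sum_congr rfl fun σ _ => Finset.prod_congr rfl fun t _ => ?_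
  simp [gram, Matrix.of_apply, PiLp.inner_apply, RCLike.inner_apply]
  exact Finset.sum_congr rfl fun _ _ => mul_comm _ _

lemma permanent_one {T : ℕ} : permanent (1 : Matrix (Fin T) (Fin T) ℂ) = 1 := by
  rw [permanent, Finset.sum_eq_single 1]
  · simp [Matrix.one_apply]
  · intro σ _ hσ
    obtain ⟨t, ht⟩ : ∃ t, σ t ≠ t := by
      by_contra h
      push_neg at h
      exact hσ (Equiv.ext h)
    refine Finset.prod_eq_zero (Finset.mem_univ t) ?_
    simp [Matrix.one_apply, Ne.symm ht]
  · intro h; exact absurd (Finset.mem_univ 1) h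

end DQAux

/-- For bipartite product unit vectors `ψ_t = u_t ⊗ w_t` (i.e. `M_t(i,j) = u_t(i)·w_t(j)`),
the double-permutation sum factorizes as `Q = per(G_u) · per(G_w)`; consequently `Q ≥ 1`,
with equality `Q = 1` when `{u_t}` and `{w_t}` are each orthonormal families — which is
possible whenever `T ≤ d`. -/
theorem doubleQ_product_states (d T : ℕ)
    (u w : Fin T → EuclideanSpace ℂ (Fin d))
    (hu : ∀ t, ‖u t‖ = 1) (hw : ∀ t, ‖w t‖ = 1) :
    doubleQ d T (fun t => Matrix.of fun i j => u t i * w t j)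
        = permanent (Matrix.of fun s t => (inner ℂ (u s) (u t) : ℂ))
          * permanent (Matrix.of fun s t => (inner ℂ (w s) (w t) : ℂ)) ∧
      (1 : ℂ) ≤ doubleQ d T (fun t => Matrix.of fun i j => u t i * w t j) ∧
      (Orthonormal ℂ u → Orthonormal ℂ w →
        doubleQ d T (fun t => Matrix.of fun i j => u t i * w t j) = 1) ∧
      (T ≤ d → ∃ u' : Fin T → EuclideanSpace ℂ (Fin d), Orthonormal ℂ u') := by
  have hfac := DQAux.factorQ d T u w
  have hpu := DQAux.permanent_gram u
  have hpw := DQAux.permanent_gram w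
  have hgu : ∀ (x : Fin T → EuclideanSpace ℂ (Fin d)) (t : Fin T),
      DQAux.gram (fun t y => x t y) t t = (inner ℂ (x t) (x t) : ℂ) := by
    intro x t
    simp only [DQAux.gram, PiLp.inner_apply, RCLike.inner_apply]
    exact Finset.sum_congr rfl fun _ _ => by ring
  have hone : ∀ (x : Fin T → EuclideanSpace ℂ (Fin d)), (∀ t, ‖x t‖ = 1) →
      (1 : ℂ) ≤ DQAux.pg (fun t y => x t y) := by
    intro x hx
    have hm := DQAux.marcus T (fun t y => x t y)
    have h1 : ∏ t, DQAux.gram (fun t y => x t y) t t = 1 :=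
      Finset.prod_eq_one fun t _ => by
        rw [hgu x t, inner_self_eq_norm_sq_to_K, hx t]
        norm_num
    rwa [h1] at hm
  have honeU := hone u hu
  have honeW := hone w hw
  refine ⟨by rw [hfac, hpu, hpw], ?_, ?_, ?_⟩
  · rw [hfac]
    calc (1 : ℂ) = 1 * 1 := (one_mul 1).symm
      _ ≤ _ := mul_le_mul honeU honeW zero_le_one (le_trans zero_le_one honeU)
  · intro hOu hOw
    have hGu : (Matrix.of fun s t => (inner ℂ (u s) (u t) : ℂ)) = 1 := by
      ext s t
      rw [Matrix.of_apply, Matrix.one_apply, orthonormal_iff_ite.1 hOu s t]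
    have hGw : (Matrix.of fun s t => (inner ℂ (w s) (w t) : ℂ)) = 1 := by
      ext s t
      rw [Matrix.of_apply, Matrix.one_apply, orthonormal_iff_ite.1 hOw s t]
    rw [hfac, ← hpu, ← hpw, hGu, hGw, DQAux.permanent_one, one_mul]
  · intro hTd
    exact ⟨fun t => (EuclideanSpace.basisFun (Fin d) ℂ) (Fin.castLE hTd t),
      ((EuclideanSpace.basisFun (Fin d) ℂ).orthonormal).comp _ (Fin.castLE_injective hTd)⟩
end

section
/- Fix n ≥ 1, d ≥ 1, T ≥ 1. Let ψ_1, …, ψ_T : ([n] → [d]) → ℂ be unit-norm tensors (∑_x |ψ_t(x)|² = 1), representing pure states of n qudits. Then the quantity Q := ∑_{(π_1,…,π_n) ∈ (S_T)^n} ∑_{x : [n] → ([T] → [d])} ∏_{t=1}^T ψ_t( i ↦ x_i(t) ) · conj( ψ_t( i ↦ x_i(π_i(t)) ) ) is a real number and Q ≥ 1. (Q equals ∑_{π_1,…,π_n ∈ S_T} tr[ (⊗̃_{i=1}^n P_d(π_i)) · ⊗_{t=1}^T |ψ_t⟩⟨ψ_t| ], where P_d(π_i) permutes the T copies of the i-th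 local factor.) -/
namespace MultiQ

variable (n d : ℕ)

noncomputable def Sg (T : ℕ) (ψ : Fin T → (Fin n → Fin d) → ℂ) (y : Fin n → Fin T → Fin d) : ℂ :=
  ∑ π : Fin n → Equiv.Perm (Fin T), ∏ t, ψ t (fun i => y i (π i t))

lemma sumY_reindex {T : ℕ} {M : Type*} [AddCommMonoid M] (σ : Fin n → Equiv.Perm (Fin T))
    (f : (Fin n → Fin T → Fin d) → M) :
    ∑ y : Fin n → Fin T → Fin d, f (fun i t => y i (σ i t)) = ∑ y, f y := by
  exact Equiv.sum_comp
    (Equiv.piCongrRight fun i => Equiv.arrowCongr (σ i).symm (Equiv.refl (Fin d))) f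

lemma sumPerm_reindex {T : ℕ} {M : Type*} [AddCommMonoid M] (σ : Fin n → Equiv.Perm (Fin T))
    (f : (Fin n → Equiv.Perm (Fin T)) → M) :
    ∑ π : Fin n → Equiv.Perm (Fin T), f (fun i => σ i * π i) = ∑ π, f π := by
  exact Equiv.sum_comp (Equiv.piCongrRight fun i => Equiv.mulLeft (σ i)) f

lemma Sg_reindex {T : ℕ} (ψ : Fin T → (Fin n → Fin d) → ℂ) (σ : Fin n → Equiv.Perm (Fin T))
    (y : Fin n → Fin T → Fin d) :
    Sg n d T ψ (fun i t => y i (σ i t)) = Sg n d T ψ y := by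
  unfold Sg
  rw [← sumPerm_reindex n σ (fun π => ∏ t, ψ t (fun i => y i (π i t)))]
  rfl

end MultiQ

namespace MultiQ
open Equiv

variable (n d : ℕ)

noncomputable def Hg (T : ℕ) (ψ : Fin (T+1) → (Fin n → Fin d) → ℂ)
    (z : Fin n → Fin (T+1) → Fin d) : ℂ :=
  ψ 0 (fun i => z i 0) * Sg n d T (fun t => ψ t.succ) (fun i t => z i t.succ)

/-- decomposition of the symmetrized function, peeling off copy 0 -/
lemma Sg_succ (T : ℕ) (ψ : Fin (T+1) → (Fin n → Fin d) → ℂ) (y : Fin n → Fin (T+1) → Fin d) :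
    Sg n d (T+1) ψ y
      = ∑ a : Fin n → Fin (T+1), Hg n d T ψ (fun i t => y i (Equiv.swap 0 (a i) t)) := by
  unfold Sg
  let e : ((Fin n → Fin (T+1)) × (Fin n → Equiv.Perm (Fin T)))
      ≃ (Fin n → Equiv.Perm (Fin (T+1))) :=
    (Equiv.arrowProdEquivProdArrow (Fin n) (fun _ => Fin (T+1)) (fun _ => Equiv.Perm (Fin T))).symm.trans
      (Equiv.piCongrRight fun _ => Equiv.Perm.decomposeFin.symm)
  rw [← Equiv.sum_comp e (fun π : Fin n → Equiv.Perm (Fin (T+1)) =>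
        ∏ t, ψ t (fun i => y i (π i t)))]
  rw [Fintype.sum_prod_type]
  refine Finset.sum_congr rfl fun a _ => ?_
  unfold Hg Sg
  rw [Finset.mul_sum]
  refine Finset.sum_congr rfl fun σ _ => ?_
  have h1 : ∀ i : Fin n, e (a, σ) i = Equiv.Perm.decomposeFin.symm (a i, σ i) := fun i => rfl
  simp only [h1]
  rw [Fin.prod_univ_succ]
  congr 1
  · congr 1; funext i; rw [Equiv.Perm.decomposeFin_symm_apply_zero, Equiv.swap_apply_left]
  · refine Finset.prod_congr rfl fun t _ => ?_
    congr 1; funext i; rw [Equiv.Perm.decomposeFin_symm_apply_succ]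

end MultiQ

namespace MultiQ
open Equiv

variable (n d : ℕ)

/-- Hg is invariant under per-site permutations fixing copy 0 -/
lemma Hg_invariant (T : ℕ) (ψ : Fin (T+1) → (Fin n → Fin d) → ℂ)
    (ρ : Fin n → Equiv.Perm (Fin T)) (z : Fin n → Fin (T+1) → Fin d) :
    Hg n d T ψ (fun i t => z i (Equiv.Perm.decomposeFin.symm (0, ρ i) t)) = Hg n d T ψ z := by
  unfold Hg
  simp only [Equiv.Perm.decomposeFin_symm_apply_zero,
    Equiv.Perm.decomposeFin_symm_apply_succ, Equiv.swap_self, Equiv.refl_apply]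
  congr 1
  exact Sg_reindex n d (fun t => ψ t.succ) ρ (fun i t => z i t.succ)

/-- any permutation is a (swap with 0) followed by a 0-fixing permutation -/
lemma perm_decomp {T : ℕ} (g : Equiv.Perm (Fin (T+1))) :
    ∃ ρ : Equiv.Perm (Fin T), ∀ t,
      g t = Equiv.swap 0 (g 0) (Equiv.Perm.decomposeFin.symm (0, ρ) t) := by
  set τ : Equiv.Perm (Fin (T+1)) := Equiv.swap 0 (g 0) * g with hτ
  have hτ0 : τ 0 = 0 := by simp [hτ]
  set pr := Equiv.Perm.decomposeFin τ with hpr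
  have h1 : Equiv.Perm.decomposeFin.symm pr = τ := Equiv.symm_apply_apply _ _
  have hp : pr.1 = 0 := by
    have h2 := Equiv.Perm.decomposeFin_symm_apply_zero pr.1 pr.2
    rw [Prod.mk.eta, h1] at h2
    rw [← h2]; exact hτ0
  refine ⟨pr.2, fun t => ?_⟩
  have h3 : Equiv.Perm.decomposeFin.symm (0, pr.2) = τ := by
    rw [← hp, Prod.mk.eta]; exact h1
  rw [h3]
  have h4 : τ t = Equiv.swap 0 (g 0) (g t) := rfl
  rw [h4, Equiv.swap_apply_self]

end MultiQ

namespace MultiQ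
open Equiv

variable (n d : ℕ)

noncomputable def Dc (T : ℕ) (ψ : Fin (T+1) → (Fin n → Fin d) → ℂ)
    (c : Fin n → Fin (T+1)) : ℂ :=
  ∑ y : Fin n → Fin (T+1) → Fin d, Hg n d T ψ y *
    (starRingEnd ℂ) (Hg n d T ψ (fun i t => y i (Equiv.swap 0 (c i) t)))

lemma crossterm (T : ℕ) (ψ : Fin (T+1) → (Fin n → Fin d) → ℂ) (a b : Fin n → Fin (T+1)) :
    ∑ y : Fin n → Fin (T+1) → Fin d,
      Hg n d T ψ (fun i t => y i (Equiv.swap 0 (a i) t)) *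
      (starRingEnd ℂ) (Hg n d T ψ (fun i t => y i (Equiv.swap 0 (b i) t)))
    = Dc n d T ψ (fun i => Equiv.swap 0 (a i) (b i)) := by
  have step1 := sumY_reindex n d (fun i => Equiv.swap 0 (a i))
    (fun y => Hg n d T ψ (fun i t => y i (Equiv.swap 0 (a i) t)) *
      (starRingEnd ℂ) (Hg n d T ψ (fun i t => y i (Equiv.swap 0 (b i) t))))
  rw [← step1]
  unfold Dc
  refine Finset.sum_congr rfl fun y _ => ?_
  congr 1
  · congr 1; funext i t; exact congrArg (y i) (Equiv.swap_apply_self _ _ _)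
  · congr 1
    -- Hg (y ∘ (swap0a * swap0b)) = Hg (y ∘ swap0c)
    have hch : ∀ i : Fin n, ∃ ρ : Equiv.Perm (Fin T), ∀ t,
        (Equiv.swap 0 (a i) * Equiv.swap 0 (b i)) t
        = Equiv.swap 0 (Equiv.swap 0 (a i) (b i)) (Equiv.Perm.decomposeFin.symm (0, ρ) t) := by
      intro i
      have h := perm_decomp (Equiv.swap 0 (a i) * Equiv.swap 0 (b i))
      have h0 : (Equiv.swap 0 (a i) * Equiv.swap 0 (b i)) 0 = Equiv.swap 0 (a i) (b i) := by
        simp [Equiv.Perm.mul_apply]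
      rw [h0] at h
      exact h
    choose ρ hρ using hch
    have harg : (fun (i : Fin n) (t : Fin (T+1)) => y i (Equiv.swap 0 (a i) (Equiv.swap 0 (b i) t)))
        = fun i t => (fun i t => y i (Equiv.swap 0 (Equiv.swap 0 (a i) (b i)) t)) i
            (Equiv.Perm.decomposeFin.symm (0, ρ i) t) := by
      funext i t
      exact congrArg (y i) (hρ i t)
    rw [harg]
    exact Hg_invariant n d T ψ ρ (fun i t => y i (Equiv.swap 0 (Equiv.swap 0 (a i) (b i)) t))

end MultiQ

namespace MultiQ

variable (d T : ℕ)

def msw (b : Fin (T+1)) (q : (Fin (T+1) → Fin d) × (Fin d × Fin d)) :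
    (Fin (T+1) → Fin d) × (Fin d × Fin d) :=
  if b = 0 then q else
    ((fun t => if t = 0 then q.2.1 else if t = b then q.2.2 else q.1 t), (q.1 0, q.1 b))

lemma msw_invol (b : Fin (T+1)) : Function.Involutive (msw d T b) := by
  intro q
  by_cases h : b = 0
  · simp [msw, h]
  · simp only [msw, h, if_neg]
    refine Prod.ext ?_ ?_
    · funext t
      by_cases h0 : t = 0
      · simp [h0, (Ne.symm h)]
      · by_cases hb : t = b
        · simp [hb, h]
        · simp [h0, hb]
    · simp [Ne.symm h, h]


end MultiQ

namespace MultiQ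
open Equiv

variable (n d : ℕ)

lemma Dc_real (T : ℕ) (hd : 0 < d) (ψ : Fin (T+1) → (Fin n → Fin d) → ℂ)
    (c : Fin n → Fin (T+1)) :
    ∃ r : ℝ, 0 ≤ r ∧ Dc n d T ψ c = (r : ℂ) := by
  classical
  set K : (Fin n → Fin T → Fin d) → ℂ := Sg n d T (fun t => ψ t.succ) with hK
  set M : (Fin n → Fin (T+1) → Fin d) → (Fin n → Fin d) → ℂ :=
    fun s γ => ψ 0 (fun i => if c i = 0 then s i 0 else γ i) *
      (starRingEnd ℂ) (K (fun i t => if t.succ = c i then γ i else s i t.succ)) with hM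
  set G : (Fin n → Fin (T+1) → Fin d) → ℂ :=
    fun y => Hg n d T ψ y *
      (starRingEnd ℂ) (Hg n d T ψ (fun i t => y i (Equiv.swap 0 (c i) t))) with hG
  set build : (Fin n → (Fin (T+1) → Fin d) × (Fin d × Fin d)) →
      (Fin n → Fin (T+1) → Fin d) :=
    fun q i t => if c i = 0 then (q i).1 t else
      if t = 0 then (q i).2.1 else if t = c i then (q i).2.2 else (q i).1 t with hbuild
  -- counting claim
  have hcount : ∑ q, G (build q)
      = (Fintype.card (Fin n → Fin d × Fin d) : ℂ) * ∑ y, G y := by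
    let J : (Fin n → (Fin (T+1) → Fin d) × (Fin d × Fin d))
        ≃ (Fin n → (Fin (T+1) → Fin d) × (Fin d × Fin d)) :=
      Equiv.piCongrRight fun i => (msw_invol d T (c i)).toPerm
    have hbuildJ : ∀ q, build (J q) = fun i => (q i).1 := by
      intro q
      funext i t
      have hJ : J q i = msw d T (c i) (q i) := rfl
      rw [hbuild]
      simp only [hJ]
      by_cases h : c i = 0
      · simp [msw, h]
      · simp only [msw, h, if_neg, if_false]
        by_cases h0 : t = 0
        · simp [h0, h]
        · by_cases hb : t = c i
          · simp [h0, hb, h, Ne.symm h]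
          · simp [h0, hb, h]
    have e1 := Equiv.sum_comp J (fun q => G (build q))
    rw [← e1]
    have e2 : ∀ q, G (build (J q)) = G (fun i => (q i).1) := fun q => by rw [hbuildJ]
    rw [Fintype.sum_congr _ _ e2]
    -- split the pi-of-products
    have e3 := Equiv.sum_comp
      (Equiv.arrowProdEquivProdArrow (Fin n) (fun _ => Fin (T+1) → Fin d) (fun _ => Fin d × Fin d)).symm
      (fun q : Fin n → (Fin (T+1) → Fin d) × (Fin d × Fin d) => G (fun i => (q i).1))
    rw [← e3, Fintype.sum_prod_type, Finset.mul_sum]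
    refine Finset.sum_congr rfl fun s _ => ?_
    have hconst : ∀ ab : Fin n → Fin d × Fin d,
        (G fun i => ((Equiv.arrowProdEquivProdArrow (Fin n) (fun _ => Fin (T+1) → Fin d)
          (fun _ => Fin d × Fin d)).symm (s, ab) i).1) = G s := fun _ => rfl
    rw [Fintype.sum_congr _ _ hconst, Finset.sum_const, Finset.card_univ, nsmul_eq_mul]
  -- termwise claim
  have hterm : ∀ q, G (build q)
      = M (fun i => (q i).1) (fun i => (q i).2.1) *
        (starRingEnd ℂ) (M (fun i => (q i).1) (fun i => (q i).2.2)) := by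
    intro q
    have hA : (fun i => build q i 0)
        = fun i => if c i = 0 then (q i).1 0 else (q i).2.1 := by
      funext i; rw [hbuild]; by_cases h : c i = 0 <;> simp [h]
    have hB : (fun (i : Fin n) (t : Fin T) => build q i t.succ)
        = fun i t => if t.succ = c i then (q i).2.2 else (q i).1 t.succ := by
      funext i t; rw [hbuild]
      by_cases h : c i = 0
      · simp [h, Fin.succ_ne_zero]
      · simp [h, Fin.succ_ne_zero]
    have hC : (fun i => build q i (Equiv.swap 0 (c i) 0))
        = fun i => if c i = 0 then (q i).1 0 else (q i).2.2 := by
      funext i; rw [hbuild, Equiv.swap_apply_left]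
      by_cases h : c i = 0
      · simp [h]
      · simp [h, Ne.symm h]
    have hD : (fun (i : Fin n) (t : Fin T) => build q i (Equiv.swap 0 (c i) t.succ))
        = fun i t => if t.succ = c i then (q i).2.1 else (q i).1 t.succ := by
      funext i t; rw [hbuild]
      by_cases hb : t.succ = c i
      · rw [hb, Equiv.swap_apply_right]
        have h : c i ≠ 0 := by rw [← hb]; exact Fin.succ_ne_zero t
        simp [h, hb]
      · rw [Equiv.swap_apply_of_ne_of_ne (Fin.succ_ne_zero t) hb]
        by_cases h : c i = 0
        · simp [h, hb, Fin.succ_ne_zero]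
        · simp [h, hb, Fin.succ_ne_zero]
    simp only [hG, hM]
    unfold Hg
    rw [← hK]
    simp only [hA, hB, hC, hD]
    simp only [map_mul, Complex.conj_conj, RingHom.id_apply]
    ring
  have key : (Fintype.card (Fin n → Fin d × Fin d) : ℂ) * Dc n d T ψ c
      = ∑ s : Fin n → Fin (T+1) → Fin d,
          (Complex.normSq (∑ γ : Fin n → Fin d, M s γ) : ℂ) := by
    have hDc : Dc n d T ψ c = ∑ y, G y := rfl
    rw [hDc, ← hcount, Fintype.sum_congr _ _ hterm]
    have e4 := Fintype.sum_equiv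
      (Equiv.arrowProdEquivProdArrow (Fin n) (fun _ => Fin (T+1) → Fin d) (fun _ => Fin d × Fin d))
      (fun q : Fin n → (Fin (T+1) → Fin d) × (Fin d × Fin d) =>
        M (fun i => (q i).1) (fun i => (q i).2.1) *
          (starRingEnd ℂ) (M (fun i => (q i).1) (fun i => (q i).2.2)))
      (fun p => M p.1 (fun i => (p.2 i).1) * (starRingEnd ℂ) (M p.1 (fun i => (p.2 i).2)))
      (fun q => rfl)
    rw [e4, Fintype.sum_prod_type]
    refine Finset.sum_congr rfl fun s _ => ?_
    have e5 := Fintype.sum_equiv (Equiv.arrowProdEquivProdArrow (Fin n) (fun _ => Fin d) (fun _ => Fin d))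
      (fun ab : Fin n → Fin d × Fin d =>
        M s (fun i => (ab i).1) * (starRingEnd ℂ) (M s (fun i => (ab i).2)))
      (fun p : (Fin n → Fin d) × (Fin n → Fin d) =>
        M s p.1 * (starRingEnd ℂ) (M s p.2))
      (fun ab => rfl)
    rw [e5, Fintype.sum_prod_type]
    have hb : ∀ (x y : Fin n → Fin d),
        M s (x, y).1 * (starRingEnd ℂ) (M s (x, y).2)
        = M s x * (starRingEnd ℂ) (M s y) := fun _ _ => rfl
    simp only [hb]
    rw [← Finset.sum_mul_sum, ← map_sum, Complex.mul_conj]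
  haveI : Nonempty (Fin d) := Fin.pos_iff_nonempty.mp hd
  have hNpos : 0 < Fintype.card (Fin n → Fin d × Fin d) := Fintype.card_pos
  have hNC : (Fintype.card (Fin n → Fin d × Fin d) : ℂ) ≠ 0 := by
    exact_mod_cast Nat.cast_ne_zero.mpr hNpos.ne'
  refine ⟨(∑ s, Complex.normSq (∑ γ : Fin n → Fin d, M s γ)) /
    (Fintype.card (Fin n → Fin d × Fin d) : ℝ), ?_, ?_⟩
  · apply div_nonneg
    · exact Finset.sum_nonneg fun s _ => Complex.normSq_nonneg _
    · positivity
  · push_cast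
    rw [eq_div_iff hNC]
    linear_combination key

end MultiQ

namespace MultiQ
open Equiv

variable (n d : ℕ)

lemma Dc_zero (T : ℕ) (ψ : Fin (T+1) → (Fin n → Fin d) → ℂ) :
    Dc n d T ψ (fun _ => 0)
      = ((∑ y : Fin n → Fin (T+1) → Fin d, Complex.normSq (Hg n d T ψ y) : ℝ) : ℂ) := by
  unfold Dc
  rw [Complex.ofReal_sum]
  refine Finset.sum_congr rfl fun y _ => ?_
  have h1 : (fun (i : Fin n) (t : Fin (T+1)) =>
      y i (Equiv.swap 0 ((fun (_ : Fin n) => (0 : Fin (T+1))) i) t)) = y := by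
    funext i t; rw [Equiv.swap_self]; rfl
  rw [h1, Complex.mul_conj]

lemma Hg_normSq_sum (T : ℕ) (ψ : Fin (T+1) → (Fin n → Fin d) → ℂ) :
    ∑ z : Fin n → Fin (T+1) → Fin d, Complex.normSq (Hg n d T ψ z)
      = (∑ u : Fin n → Fin d, Complex.normSq (ψ 0 u)) *
        (∑ w : Fin n → Fin T → Fin d,
          Complex.normSq (Sg n d T (fun t => ψ t.succ) w)) := by
  let E : (Fin n → Fin (T+1) → Fin d)
      ≃ (Fin n → Fin d) × (Fin n → Fin T → Fin d) :=
    (Equiv.piCongrRight fun _ : Fin n => (Fin.consEquiv (fun _ : Fin (T+1) => Fin d)).symm).trans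
      (Equiv.arrowProdEquivProdArrow (Fin n) (fun _ => Fin d) (fun _ => Fin T → Fin d))
  have h : ∀ z, Complex.normSq (Hg n d T ψ z)
      = Complex.normSq (ψ 0 (fun i => z i 0)) *
        Complex.normSq (Sg n d T (fun t => ψ t.succ) (fun i t => z i t.succ)) :=
    fun z => Complex.normSq_mul _ _
  rw [Fintype.sum_equiv E _
    (fun p => Complex.normSq (ψ 0 p.1) *
      Complex.normSq (Sg n d T (fun t => ψ t.succ) p.2)) h]
  rw [Fintype.sum_prod_type]
  have hb : ∀ (u : Fin n → Fin d) (w : Fin n → Fin T → Fin d),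
      Complex.normSq (ψ 0 (u, w).1) * Complex.normSq (Sg n d T (fun t => ψ t.succ) (u, w).2)
      = Complex.normSq (ψ 0 u) * Complex.normSq (Sg n d T (fun t => ψ t.succ) w) :=
    fun _ _ => rfl
  simp only [hb]
  rw [← Finset.sum_mul_sum]

lemma L1 (hd : 0 < d) (T : ℕ) (ψ : Fin T → (Fin n → Fin d) → ℂ)
    (hψ : ∀ t, ∑ x : Fin n → Fin d, Complex.normSq (ψ t x) = 1) :
    ((T.factorial : ℝ))^n ≤ ∑ y : Fin n → Fin T → Fin d, Complex.normSq (Sg n d T ψ y) := by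
  induction T with
  | zero =>
    have h1 : ∀ y : Fin n → Fin 0 → Fin d, Sg n d 0 ψ y = 1 := by
      intro y
      unfold Sg
      simp
    simp [h1]
  | succ T ih =>
    have hexp : ((∑ y : Fin n → Fin (T+1) → Fin d,
        Complex.normSq (Sg n d (T+1) ψ y) : ℝ) : ℂ)
        = ∑ a : Fin n → Fin (T+1), ∑ b : Fin n → Fin (T+1),
            Dc n d T ψ (fun i => Equiv.swap 0 (a i) (b i)) := by
      rw [Complex.ofReal_sum]
      have h1 : ∀ y ∈ (Finset.univ : Finset (Fin n → Fin (T+1) → Fin d)),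
          (Complex.normSq (Sg n d (T+1) ψ y) : ℂ)
          = ∑ a : Fin n → Fin (T+1), ∑ b : Fin n → Fin (T+1),
              Hg n d T ψ (fun i t => y i (Equiv.swap 0 (a i) t)) *
              (starRingEnd ℂ) (Hg n d T ψ (fun i t => y i (Equiv.swap 0 (b i) t))) := by
        intro y _
        rw [← Complex.mul_conj, Sg_succ, map_sum, Finset.sum_mul_sum]
      rw [Finset.sum_congr rfl h1, Finset.sum_comm]
      refine Finset.sum_congr rfl fun a _ => ?_
      rw [Finset.sum_comm]
      refine Finset.sum_congr rfl fun b _ => ?_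
      exact crossterm n d T ψ a b
    choose r hr0 hr1 using fun cfun => Dc_real n d T hd ψ cfun
    have hsum : ∑ y : Fin n → Fin (T+1) → Fin d, Complex.normSq (Sg n d (T+1) ψ y)
        = ∑ a : Fin n → Fin (T+1), ∑ b : Fin n → Fin (T+1),
            r (fun i => Equiv.swap 0 (a i) (b i)) := by
      have h2 : ((∑ y : Fin n → Fin (T+1) → Fin d,
          Complex.normSq (Sg n d (T+1) ψ y) : ℝ) : ℂ)
          = ((∑ a : Fin n → Fin (T+1), ∑ b : Fin n → Fin (T+1),
              r (fun i => Equiv.swap 0 (a i) (b i)) : ℝ) : ℂ) := by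
        rw [hexp]
        push_cast
        exact Finset.sum_congr rfl fun a _ => Finset.sum_congr rfl fun b _ => hr1 _
      exact_mod_cast h2
    have hr0val : r (fun _ => 0)
        = ∑ z : Fin n → Fin (T+1) → Fin d, Complex.normSq (Hg n d T ψ z) := by
      have h3 := (hr1 (fun _ => 0)).symm.trans (Dc_zero n d T ψ)
      exact_mod_cast h3
    have hHgge : (T.factorial : ℝ)^n
        ≤ ∑ z : Fin n → Fin (T+1) → Fin d, Complex.normSq (Hg n d T ψ z) := by
      rw [Hg_normSq_sum, hψ 0, one_mul]
      exact ih (fun t => ψ t.succ) (fun t => hψ t.succ)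
    -- diagonal bound
    have hdiag : ∀ a : Fin n → Fin (T+1),
        (fun i => Equiv.swap (0 : Fin (T+1)) (a i) (a i)) = (fun _ => (0 : Fin (T+1))) :=
      fun a => funext fun i => Equiv.swap_apply_right _ _
    have himg : ∑ a : Fin n → Fin (T+1), r (fun i => Equiv.swap 0 (a i) (a i))
        ≤ ∑ p : (Fin n → Fin (T+1)) × (Fin n → Fin (T+1)),
            r (fun i => Equiv.swap 0 (p.1 i) (p.2 i)) := by
      have hinjs : ∀ x ∈ (Finset.univ : Finset (Fin n → Fin (T+1))), ∀ y ∈ Finset.univ,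
          (fun a => (a, a)) x = (fun a => (a, a)) y → x = y := by
        intro x _ y _ h
        exact (Prod.ext_iff.mp h).1
      have h4 := Finset.sum_image (f := fun p : (Fin n → Fin (T+1)) × (Fin n → Fin (T+1)) =>
        r (fun i => Equiv.swap 0 (p.1 i) (p.2 i))) hinjs
      rw [← h4]
      exact Finset.sum_le_sum_of_subset_of_nonneg (Finset.subset_univ _)
        (fun p _ _ => hr0 _)
    have hcardA : (Fintype.card (Fin n → Fin (T+1)) : ℝ) = ((T+1 : ℕ) : ℝ)^n := by
      rw [Fintype.card_fun, Fintype.card_fin, Fintype.card_fin]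
      push_cast
      ring
    have hdiagsum : ∑ a : Fin n → Fin (T+1), r (fun i => Equiv.swap 0 (a i) (a i))
        = ((T+1 : ℕ) : ℝ)^n * r (fun _ => 0) := by
      have : ∀ a : Fin n → Fin (T+1), r (fun i => Equiv.swap 0 (a i) (a i))
          = r (fun _ => 0) := fun a => congrArg r (hdiag a)
      rw [Finset.sum_congr rfl (fun a _ => this a), Finset.sum_const, Finset.card_univ,
        nsmul_eq_mul, hcardA]
    have hps : ∑ p : (Fin n → Fin (T+1)) × (Fin n → Fin (T+1)),
        r (fun i => Equiv.swap 0 (p.1 i) (p.2 i))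
        = ∑ a : Fin n → Fin (T+1), ∑ b : Fin n → Fin (T+1),
            r (fun i => Equiv.swap 0 (a i) (b i)) := Fintype.sum_prod_type _
    rw [hsum, ← hps]
    calc ((T+1).factorial : ℝ)^n
        = ((T+1:ℕ) : ℝ)^n * (T.factorial : ℝ)^n := by
          rw [Nat.factorial_succ, ← mul_pow]
          congr 1
          push_cast
          ring
      _ ≤ ((T+1:ℕ) : ℝ)^n * r (fun _ => 0) := by
          apply mul_le_mul_of_nonneg_left _ (by positivity)
          rw [hr0val]
          exact hHgge
      _ = ∑ a : Fin n → Fin (T+1), r (fun i => Equiv.swap 0 (a i) (a i)) := hdiagsum.symm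
      _ ≤ ∑ p : (Fin n → Fin (T+1)) × (Fin n → Fin (T+1)),
            r (fun i => Equiv.swap 0 (p.1 i) (p.2 i)) := himg

end MultiQ

namespace MultiQ
open Equiv

variable (n d : ℕ)

lemma expand (T : ℕ) (ψ : Fin T → (Fin n → Fin d) → ℂ) :
    ((∑ y : Fin n → Fin T → Fin d, Complex.normSq (Sg n d T ψ y) : ℝ) : ℂ)
    = ((T.factorial : ℂ))^n * ∑ π : Fin n → Equiv.Perm (Fin T),
        ∑ x : Fin n → Fin T → Fin d,
          (∏ t, ψ t (fun i => x i t)) *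
            (starRingEnd ℂ) (∏ t, ψ t (fun i => x i (π i t))) := by
  rw [Complex.ofReal_sum]
  have h1 : ∀ y ∈ (Finset.univ : Finset (Fin n → Fin T → Fin d)),
      ((Complex.normSq (Sg n d T ψ y) : ℝ) : ℂ)
      = ∑ σ : Fin n → Equiv.Perm (Fin T), ∑ τ : Fin n → Equiv.Perm (Fin T),
          (∏ t, ψ t (fun i => y i (σ i t))) *
            (starRingEnd ℂ) (∏ t, ψ t (fun i => y i (τ i t))) := by
    intro y _
    rw [← Complex.mul_conj]
    unfold Sg
    rw [map_sum, Finset.sum_mul_sum]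
  rw [Finset.sum_congr rfl h1, Finset.sum_comm]
  rw [Finset.sum_congr rfl (fun σ _ => Finset.sum_comm)]
  have h3 : ∀ σ : Fin n → Equiv.Perm (Fin T),
      (∑ τ : Fin n → Equiv.Perm (Fin T), ∑ y : Fin n → Fin T → Fin d,
        (∏ t, ψ t (fun i => y i (σ i t))) *
          (starRingEnd ℂ) (∏ t, ψ t (fun i => y i (τ i t))))
      = ∑ π : Fin n → Equiv.Perm (Fin T), ∑ x : Fin n → Fin T → Fin d,
          (∏ t, ψ t (fun i => x i t)) *
            (starRingEnd ℂ) (∏ t, ψ t (fun i => x i (π i t))) := by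
    intro σ
    have hA : ∀ τ : Fin n → Equiv.Perm (Fin T),
        (∑ x : Fin n → Fin T → Fin d, (∏ t, ψ t (fun i => x i t)) *
          (starRingEnd ℂ) (∏ t, ψ t (fun i => x i (τ i t))))
        = ∑ y : Fin n → Fin T → Fin d, (∏ t, ψ t (fun i => y i (σ i t))) *
            (starRingEnd ℂ) (∏ t, ψ t (fun i => y i ((σ i * τ i) t))) := by
      intro τ
      rw [← sumY_reindex n d σ (fun x => (∏ t, ψ t (fun i => x i t)) *
        (starRingEnd ℂ) (∏ t, ψ t (fun i => x i (τ i t))))]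
      exact Finset.sum_congr rfl fun y _ => rfl
    rw [← sumPerm_reindex n σ (fun τ => ∑ y : Fin n → Fin T → Fin d,
      (∏ t, ψ t (fun i => y i (σ i t))) *
        (starRingEnd ℂ) (∏ t, ψ t (fun i => y i (τ i t))))]
    refine Finset.sum_congr rfl fun τ _ => ?_
    rw [hA τ]
  rw [Finset.sum_congr rfl (fun σ _ => h3 σ), Finset.sum_const, Finset.card_univ,
    nsmul_eq_mul, Fintype.card_fun, Fintype.card_perm, Fintype.card_fin, Fintype.card_fin]
  push_cast
  ring

end MultiQ


open scoped ComplexOrder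

/-- **Multipartite permutation-operator overlap lower bound.** For unit-norm `n`-qudit
tensors `ψ_1, …, ψ_T : ([n] → [d]) → ℂ`, the quantity
`Q = ∑_{π_1,…,π_n ∈ S_T} tr[(⊗̃_i P_d(π_i)) · ⊗_t |ψ_t⟩⟨ψ_t|]`, written out explicitly
in coordinates, is real and at least 1 (stated via the partial order on `ℂ`). -/
theorem multiQ_ge_one (n d T : ℕ) (hn : 1 ≤ n) (hd : 1 ≤ d) (hT : 1 ≤ T)
    (ψ : Fin T → (Fin n → Fin d) → ℂ)
    (hψ : ∀ t, ∑ x : Fin n → Fin d, ‖ψ t x‖ ^ 2 = 1) :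
    (1 : ℂ) ≤ ∑ π : Fin n → Equiv.Perm (Fin T), ∑ x : Fin n → Fin T → Fin d,
      ∏ t, ψ t (fun i => x i t) * (starRingEnd ℂ) (ψ t (fun i => x i (π i t))) := by
  have hψ' : ∀ t, ∑ x : Fin n → Fin d, Complex.normSq (ψ t x) = 1 := by
    intro t
    rw [← hψ t]
    refine Finset.sum_congr rfl fun x _ => ?_
    rw [← Complex.sq_norm]
  have hL := MultiQ.L1 n d (by omega) T ψ hψ'
  have hgoal : (∑ π : Fin n → Equiv.Perm (Fin T), ∑ x : Fin n → Fin T → Fin d,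
        ∏ t, ψ t (fun i => x i t) * (starRingEnd ℂ) (ψ t (fun i => x i (π i t))))
      = ∑ π : Fin n → Equiv.Perm (Fin T), ∑ x : Fin n → Fin T → Fin d,
          (∏ t, ψ t (fun i => x i t)) *
            (starRingEnd ℂ) (∏ t, ψ t (fun i => x i (π i t))) := by
    refine Finset.sum_congr rfl fun π _ => Finset.sum_congr rfl fun x _ => ?_
    rw [Finset.prod_mul_distrib, map_prod]
  rw [hgoal]
  have key := MultiQ.expand n d T ψ
  have hfac0 : (0:ℝ) < ((T.factorial : ℝ))^n := by positivity
  have hfacC : ((T.factorial : ℂ))^n ≠ 0 := by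
    apply pow_ne_zero
    exact_mod_cast Nat.cast_ne_zero.mpr T.factorial_ne_zero
  set Q := ∑ π : Fin n → Equiv.Perm (Fin T), ∑ x : Fin n → Fin T → Fin d,
          (∏ t, ψ t (fun i => x i t)) *
            (starRingEnd ℂ) (∏ t, ψ t (fun i => x i (π i t))) with hQdef
  set q : ℝ := (∑ y : Fin n → Fin T → Fin d, Complex.normSq (MultiQ.Sg n d T ψ y)) /
    ((T.factorial : ℝ))^n with hqdef
  have hQr : Q = (q : ℂ) := by
    apply mul_left_cancel₀ hfacC
    rw [← key, hqdef]
    push_cast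
    field_simp
  rw [hQr, ← Complex.ofReal_one, Complex.real_le_real]
  rw [hqdef, le_div_iff₀ hfac0, one_mul]
  exact hL
end
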